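/- arXiv:2605.13406 — 8 statements merged into one kernel-verified Lean document; each statement's English description precedes it below -/
import Mathlib

section
/- Let G be a countable group and let φ, ψ be minimal actions of G on the line. Suppose there are a sequence (fₙ) in Homeo₀(ℝ) and a sequence of minimal actions (φₙ) of G such that φₙ converges pointwise to φ and the conjugate actions fₙ.φₙ converge pointwise to ψ. If there exists x ∈ ℝ such that the sequence (fₙ⁻¹(x)) admits a limit point y ∈ ℝ, then there exists f ∈ Homeo₀(ℝ) with f.φ = ψ and f(y) = x. -/
open Topology Filter

/-!  `ℝ ≃o ℝ` is the group `Homeo₀(ℝ)` of orientation-preserving homeomorphisms of the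
line (order isomorphisms of `ℝ`).  An action of a group `G` on the line is a group
homomorphism `G →* (ℝ ≃o ℝ)`. -/

/-- The underlying map of an action, as a point of the function space `G → ℝ → ℝ`
(equipped with the product topology of pointwise convergence and its Borel σ-algebra). -/
def actMap {G : Type*} [Group G] (φ : G →* (ℝ ≃o ℝ)) : G → ℝ → ℝ := fun g => ⇑(φ g)

/-- An action is minimal if every orbit is dense. -/
def IsMinimalAction {G : Type*} [Group G] (φ : G →* (ℝ ≃o ℝ)) : Prop :=
  ∀ x : ℝ, Dense {y : ℝ | ∃ g : G, φ g x = y}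

/-- Conjugation of (the underlying map of) an action by `f ∈ Homeo₀(ℝ)`. -/
def conjFun {G : Type*} (f : ℝ ≃o ℝ) (F : G → ℝ → ℝ) : G → ℝ → ℝ :=
  fun g x => f (F g (f.symm x))

/-- The space of minimal actions of `G` on the line, as a subset of the function
space `G → ℝ → ℝ`. -/
def RepMin (G : Type*) [Group G] : Set (G → ℝ → ℝ) :=
  {F | ∃ φ : G →* (ℝ ≃o ℝ), IsMinimalAction φ ∧ F = actMap φ}

/-- `G` belongs to the class `𝒞`: the conjugacy relation on `RepMin G` is smooth, i.e.
there is a Borel map to `ℝ` whose fibers are exactly the conjugacy classes. -/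
def ClassC (G : Type*) [Group G] : Prop :=
  ∃ r : (RepMin G) → ℝ, Measurable r ∧
    ∀ φ ψ : RepMin G, (r φ = r ψ ↔ ∃ f : ℝ ≃o ℝ, conjFun f (φ : G → ℝ → ℝ) = (ψ : G → ℝ → ℝ))

/- ## Auxiliary lemmas -/

lemma act_mul {G : Type*} [Group G] (e : G →* (ℝ ≃o ℝ)) (g h : G) (v : ℝ) :
    e (g * h) v = e g (e h v) := by rw [map_mul]; rfl

lemma act_inv {G : Type*} [Group G] (e : G →* (ℝ ≃o ℝ)) (g : G) (v : ℝ) :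
    e g⁻¹ v = (e g).symm v := by rw [map_inv]; rfl

lemma act_one {G : Type*} [Group G] (e : G →* (ℝ ≃o ℝ)) (v : ℝ) :
    e 1 v = v := by rw [map_one]; rfl

lemma act_symm_fix {G : Type*} [Group G] (e : G →* (ℝ ≃o ℝ)) (g : G) (v : ℝ)
    (h : e g v = v) : (e g).symm v = v := by
  have := congrArg (e g).symm h
  rw [OrderIso.symm_apply_apply] at this
  exact this.symm

lemma orbit_between {G : Type*} [Group G] (e : G →* (ℝ ≃o ℝ)) (he : IsMinimalAction e)
    (p a b : ℝ) (hab : a < b) : ∃ g : G, a < e g p ∧ e g p < b := by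
  obtain ⟨c, ⟨g, hg⟩, hc⟩ := (he p).exists_between hab
  exact ⟨g, by rw [hg]; exact hc.1, by rw [hg]; exact hc.2⟩

/-- Stabilizer transfer, one-sided version. -/
lemma stab_aux {G : Type*} [Group G] (φ ψ : G →* (ℝ ≃o ℝ))
    (hφ : IsMinimalAction φ) (hψ : IsMinimalAction ψ) (y x : ℝ)
    (hc1 : ∀ g h : G, φ g y < φ h y → ψ g x ≤ ψ h x)
    (hc2 : ∀ g h : G, ψ g x < ψ h x → φ g y ≤ φ h y)
    (k : G) (hk : φ k y = y) : ¬ x < ψ k x := by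
  intro hx
  -- the image of the stabilizer of `y`
  set T : Set ℝ := {w | ∃ h : G, φ h y = y ∧ ψ h x = w} with hT
  have TxMem : x ∈ T := ⟨1, act_one φ y, act_one ψ x⟩
  have Tne : T.Nonempty := ⟨x, TxMem⟩
  obtain ⟨g₀, hg₀, -⟩ := orbit_between φ hφ y y (y + 1) (lt_add_one y)
  have Tbdd : BddAbove T := by
    refine ⟨ψ g₀ x, ?_⟩
    rintro w ⟨h, hh, rfl⟩
    exact hc1 h g₀ (by rw [hh]; exact hg₀)
  set β := sSup T with hβ
  have hkT : ψ k x ∈ T := ⟨k, hk, rfl⟩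
  have hxβ : x < β := lt_of_lt_of_le hx (le_csSup Tbdd hkT)
  -- the image of the stabilizer fixes β
  have hfix : ∀ g : G, φ g y = y → ψ g β = β := by
    intro g hg
    have himg : ψ g '' T = T := by
      ext w
      constructor
      · rintro ⟨w', ⟨h, hh, rfl⟩, rfl⟩
        refine ⟨g * h, ?_, act_mul ψ g h x⟩
        rw [act_mul, hh, hg]
      · rintro ⟨h, hh, rfl⟩
        refine ⟨ψ (g⁻¹ * h) x, ⟨g⁻¹ * h, ?_, rfl⟩, ?_⟩
        · rw [act_mul, hh, act_inv]
          exact act_symm_fix φ g y hg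
        · rw [← act_mul, ← mul_assoc, mul_inv_cancel, one_mul]
    have hlub : IsLUB T β := isLUB_csSup Tne Tbdd
    have hlub2 : IsLUB (ψ g '' T) (ψ g β) := (OrderIso.isLUB_image' (ψ g)).mpr hlub
    rw [himg] at hlub2
    exact hlub2.unique hlub
  -- minimality of ψ at β produces a contradiction
  obtain ⟨g, hg1, hg2⟩ := orbit_between ψ hψ β x β hxβ
  obtain ⟨t₂, ht₂T, ht₂⟩ := exists_lt_of_lt_csSup Tne hg2
  -- an open neighbourhood of β pulled back by ψ g
  have hcont : Continuous (ψ g) := (ψ g).continuous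
  have hUopen : IsOpen ((ψ g) ⁻¹' Set.Ioo x t₂) := isOpen_Ioo.preimage hcont
  have hβU : β ∈ (ψ g) ⁻¹' Set.Ioo x t₂ := ⟨hg1, ht₂⟩
  obtain ⟨ε, hε, hball⟩ := Metric.isOpen_iff.mp hUopen β hβU
  obtain ⟨t, htT, htlt⟩ := exists_lt_of_lt_csSup Tne (show β - ε < β by linarith)
  have htle : t ≤ β := le_csSup Tbdd htT
  have htball : t ∈ Metric.ball β ε := by
    rw [Metric.mem_ball, Real.dist_eq, abs_lt]
    constructor <;> linarith
  have htIoo : ψ g t ∈ Set.Ioo x t₂ := hball htball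
  obtain ⟨h, hhy, hhx⟩ := htT
  obtain ⟨h₂, hh₂y, hh₂x⟩ := ht₂T
  -- from x < ψ (g h) x < ψ h₂ x deduce φ g y = y
  have e1 : ψ 1 x < ψ (g * h) x := by
    rw [act_one, act_mul, hhx]; exact htIoo.1
  have e2 : ψ (g * h) x < ψ h₂ x := by
    rw [act_mul, hhx, hh₂x]; exact htIoo.2
  have d1 : y ≤ φ (g * h) y := by
    have := hc2 1 (g * h) e1
    rwa [act_one] at this
  have d2 : φ (g * h) y ≤ y := by
    have := hc2 (g * h) h₂ e2
    rwa [hh₂y] at this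
  have hgy : φ g y = y := by
    have : φ (g * h) y = y := le_antisymm d2 d1
    rwa [act_mul, hhy] at this
  have : ψ g β = β := hfix g hgy
  rw [this] at hg2
  exact lt_irrefl β hg2

/-- Stabilizer transfer. -/
lemma stab_full {G : Type*} [Group G] (φ ψ : G →* (ℝ ≃o ℝ))
    (hφ : IsMinimalAction φ) (hψ : IsMinimalAction ψ) (y x : ℝ)
    (hc1 : ∀ g h : G, φ g y < φ h y → ψ g x ≤ ψ h x)
    (hc2 : ∀ g h : G, ψ g x < ψ h x → φ g y ≤ φ h y)
    (k : G) (hk : φ k y = y) : ψ k x = x := by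
  have hk' : φ k⁻¹ y = y := by
    rw [act_inv]
    exact act_symm_fix φ k y hk
  rcases lt_trichotomy (ψ k x) x with h | h | h
  · exfalso
    refine stab_aux φ ψ hφ hψ y x hc1 hc2 k⁻¹ hk' ?_
    rw [act_inv]
    have := (ψ k).symm.strictMono h
    rwa [OrderIso.symm_apply_apply] at this
  · exact h
  · exact absurd h (stab_aux φ ψ hφ hψ y x hc1 hc2 k hk)

/-- Building the conjugating homeomorphism from an order-equivalence of the orbits. -/
lemma build_conj {G : Type*} [Group G] (φ ψ : G →* (ℝ ≃o ℝ))
    (hφ : IsMinimalAction φ) (hψ : IsMinimalAction ψ) (y x : ℝ)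
    (hstrict : ∀ g h : G, φ g y < φ h y ↔ ψ g x < ψ h x) :
    ∃ F : ℝ ≃o ℝ, conjFun F (actMap φ) = actMap ψ ∧ F y = x := by
  classical
  set S : ℝ → Set ℝ := fun z => {w | ∃ g : G, φ g y < z ∧ ψ g x = w} with hS
  set Fn : ℝ → ℝ := fun z => sSup (S z) with hFn
  have Sne : ∀ z : ℝ, (S z).Nonempty := by
    intro z
    obtain ⟨g, -, hg2⟩ := orbit_between φ hφ y (z - 1) z (by linarith)
    exact ⟨ψ g x, g, hg2, rfl⟩
  have Sbdd : ∀ z : ℝ, BddAbove (S z) := by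
    intro z
    obtain ⟨h, hh1, -⟩ := orbit_between φ hφ y z (z + 1) (lt_add_one z)
    refine ⟨ψ h x, ?_⟩
    rintro w ⟨g, hg, rfl⟩
    exact le_of_lt ((hstrict g h).mp (lt_trans hg hh1))
  have hlub : ∀ h : G, IsLUB (S (φ h y)) (ψ h x) := by
    intro h
    constructor
    · rintro w ⟨g, hg, rfl⟩
      exact le_of_lt ((hstrict g h).mp hg)
    · intro u hu
      by_contra hcon
      push_neg at hcon
      obtain ⟨g', hg'1, hg'2⟩ := orbit_between ψ hψ x u (ψ h x) hcon
      have : ψ g' x ∈ S (φ h y) := ⟨g', (hstrict g' h).mpr hg'2, rfl⟩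
      exact absurd (hu this) (not_le_of_gt hg'1)
  have Fval : ∀ h : G, Fn (φ h y) = ψ h x := fun h => (hlub h).csSup_eq (Sne _)
  have Fmono : StrictMono Fn := by
    intro z z' hzz'
    obtain ⟨g₁, hg₁1, hg₁2⟩ := orbit_between φ hφ y z z' hzz'
    obtain ⟨g₂, hg₂1, hg₂2⟩ := orbit_between φ hφ y (φ g₁ y) z' hg₁2
    have l1 : Fn z ≤ ψ g₁ x := by
      refine csSup_le (Sne z) ?_
      rintro w ⟨g, hg, rfl⟩
      exact le_of_lt ((hstrict g g₁).mp (lt_trans hg hg₁1))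
    have l2 : ψ g₁ x < ψ g₂ x := (hstrict g₁ g₂).mp hg₂1
    have l3 : ψ g₂ x ≤ Fn z' := le_csSup (Sbdd z') ⟨g₂, hg₂2, rfl⟩
    exact lt_of_le_of_lt l1 (lt_of_lt_of_le l2 l3)
  have Fsurj : Function.Surjective Fn := by
    intro w
    set S' : Set ℝ := {v | ∃ g : G, ψ g x < w ∧ φ g y = v} with hS'
    have S'ne : S'.Nonempty := by
      obtain ⟨g, -, hg2⟩ := orbit_between ψ hψ x (w - 1) w (by linarith)
      exact ⟨φ g y, g, hg2, rfl⟩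
    have S'bdd : BddAbove S' := by
      obtain ⟨h, hh1, -⟩ := orbit_between ψ hψ x w (w + 1) (lt_add_one w)
      refine ⟨φ h y, ?_⟩
      rintro v ⟨g, hg, rfl⟩
      exact le_of_lt ((hstrict g h).mpr (lt_trans hg hh1))
    set z := sSup S' with hz
    have key : ∀ g : G, φ g y < z ↔ ψ g x < w := by
      intro g
      constructor
      · intro hgz
        obtain ⟨v, ⟨g', hg'w, rfl⟩, hvg⟩ := exists_lt_of_lt_csSup S'ne hgz
        exact lt_trans ((hstrict g g').mp hvg) hg'w
      · intro hgw
        obtain ⟨g', hg'1, hg'2⟩ := orbit_between ψ hψ x (ψ g x) w hgw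
        have h1 : φ g y < φ g' y := (hstrict g g').mpr hg'1
        have h2 : φ g' y ≤ z := le_csSup S'bdd ⟨g', hg'2, rfl⟩
        exact lt_of_lt_of_le h1 h2
    refine ⟨z, ?_⟩
    have hlubw : IsLUB (S z) w := by
      constructor
      · rintro v ⟨g, hg, rfl⟩
        exact le_of_lt ((key g).mp hg)
      · intro u hu
        by_contra hcon
        push_neg at hcon
        obtain ⟨g', hg'1, hg'2⟩ := orbit_between ψ hψ x u w hcon
        have : ψ g' x ∈ S z := ⟨g', (key g').mpr hg'2, rfl⟩
        exact absurd (hu this) (not_le_of_gt hg'1)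
    exact hlubw.csSup_eq (Sne z)
  have Fequi : ∀ (h : G) (z : ℝ), Fn (φ h z) = ψ h (Fn z) := by
    intro h z
    have himg : S (φ h z) = ψ h '' S z := by
      ext w
      constructor
      · rintro ⟨g, hg, rfl⟩
        refine ⟨ψ (h⁻¹ * g) x, ⟨h⁻¹ * g, ?_, rfl⟩, ?_⟩
        · rw [act_mul, act_inv]
          have := (φ h).symm.strictMono hg
          rwa [OrderIso.symm_apply_apply] at this
        · rw [← act_mul, ← mul_assoc, mul_inv_cancel, one_mul]
      · rintro ⟨w', ⟨g, hg, rfl⟩, rfl⟩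
        refine ⟨h * g, ?_, act_mul ψ h g x⟩
        rw [act_mul]
        exact (φ h).strictMono hg
    have hlubz : IsLUB (S z) (Fn z) := isLUB_csSup (Sne z) (Sbdd z)
    have hlub2 : IsLUB (ψ h '' S z) (ψ h (Fn z)) := (OrderIso.isLUB_image' (ψ h)).mpr hlubz
    rw [← himg] at hlub2
    exact hlub2.csSup_eq (Sne _)
  set F : ℝ ≃o ℝ := StrictMono.orderIsoOfSurjective Fn Fmono Fsurj with hF
  have hcoe : ∀ z : ℝ, F z = Fn z := fun z => rfl
  have hFy : F y = x := by
    have h1 : φ (1 : G) y = y := act_one φ y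
    have := Fval (1 : G)
    rw [h1, act_one] at this
    rw [hcoe]; exact this
  refine ⟨F, ?_, hFy⟩
  funext g w
  show F (φ g (F.symm w)) = ψ g w
  rw [hcoe, Fequi g (F.symm w)]
  have : Fn (F.symm w) = w := by
    rw [← hcoe, OrderIso.apply_symm_apply]
  rw [this]

theorem stmt1 (G : Type*) [Group G] [Countable G]
    (φ ψ : G →* (ℝ ≃o ℝ)) (hφ : IsMinimalAction φ) (hψ : IsMinimalAction ψ)
    (f : ℕ → (ℝ ≃o ℝ)) (φseq : ℕ → (G →* (ℝ ≃o ℝ)))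
    (hminseq : ∀ n, IsMinimalAction (φseq n))
    (hconv : ∀ (g : G) (x : ℝ),
      Tendsto (fun n => φseq n g x) atTop (𝓝 (φ g x)))
    (hconvconj : ∀ (g : G) (x : ℝ),
      Tendsto (fun n => conjFun (f n) (actMap (φseq n)) g x) atTop (𝓝 (ψ g x)))
    (x y : ℝ) (hy : MapClusterPt y atTop (fun n => (f n).symm x)) :
    ∃ F : ℝ ≃o ℝ, conjFun F (actMap φ) = actMap ψ ∧ F y = x := by
  set u : ℕ → ℝ := fun n => (f n).symm x with hu
  set l : Filter ℕ := comap u (𝓝 y) ⊓ atTop with hl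
  have hlne : l.NeBot := neBot_inf_comap_iff_map'.mpr hy
  have hul : Tendsto u l (𝓝 y) := tendsto_comap.mono_left inf_le_left
  have hlatTop : l ≤ atTop := inf_le_right
  -- convergence of moving orbit points
  have hseq : ∀ g : G, Tendsto (fun n => φseq n g (u n)) l (𝓝 (φ g y)) := by
    intro g
    rw [tendsto_order]
    constructor
    · intro c hc
      have h1 : (φ g).symm c < y := by
        have := (φ g).symm.strictMono hc
        rwa [OrderIso.symm_apply_apply] at this
      set y' := ((φ g).symm c + y) / 2 with hy'
      have h2 : (φ g).symm c < y' := by rw [hy']; linarith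
      have h3 : y' < y := by rw [hy']; linarith
      have h4 : c < φ g y' := by
        have := (φ g).strictMono h2
        rwa [OrderIso.apply_symm_apply] at this
      have ev1 : ∀ᶠ n in l, y' < u n := hul.eventually (eventually_gt_nhds h3)
      have ev2 : ∀ᶠ n in l, c < φseq n g y' :=
        ((hconv g y').mono_left hlatTop).eventually (eventually_gt_nhds h4)
      filter_upwards [ev1, ev2] with n h5 h6
      exact lt_of_lt_of_le h6 ((φseq n g).monotone (le_of_lt h5))
    · intro c hc
      have h1 : y < (φ g).symm c := by
        have := (φ g).symm.strictMono hc
        rwa [OrderIso.symm_apply_apply] at this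
      set y' := (y + (φ g).symm c) / 2 with hy'
      have h2 : y' < (φ g).symm c := by rw [hy']; linarith
      have h3 : y < y' := by rw [hy']; linarith
      have h4 : φ g y' < c := by
        have := (φ g).strictMono h2
        rwa [OrderIso.apply_symm_apply] at this
      have ev1 : ∀ᶠ n in l, u n < y' := hul.eventually (eventually_lt_nhds h3)
      have ev2 : ∀ᶠ n in l, φseq n g y' < c :=
        ((hconv g y').mono_left hlatTop).eventually (eventually_lt_nhds h4)
      filter_upwards [ev1, ev2] with n h5 h6
      exact lt_of_le_of_lt ((φseq n g).monotone (le_of_lt h5)) h6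
  -- convergence of the conjugated orbit of x
  have hconj' : ∀ g : G, Tendsto (fun n => f n (φseq n g (u n))) l (𝓝 (ψ g x)) := by
    intro g
    have := (hconvconj g x).mono_left hlatTop
    exact this
  -- the two comparison claims
  have hc1 : ∀ g h : G, φ g y < φ h y → ψ g x ≤ ψ h x := by
    intro g h hlt
    have hev := (hseq g).eventually_lt (hseq h) hlt
    refine le_of_tendsto_of_tendsto (hconj' g) (hconj' h) ?_
    filter_upwards [hev] with n hn
    exact (f n).monotone (le_of_lt hn)
  have hc2 : ∀ g h : G, ψ g x < ψ h x → φ g y ≤ φ h y := by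
    intro g h hlt
    have hev := (hconj' g).eventually_lt (hconj' h) hlt
    refine le_of_tendsto_of_tendsto (hseq g) (hseq h) ?_
    filter_upwards [hev] with n hn
    exact le_of_lt (((f n).lt_iff_lt).mp hn)
  -- stabilizer transfers in both directions
  have hstabA : ∀ k : G, φ k y = y → ψ k x = x := stab_full φ ψ hφ hψ y x hc1 hc2
  have hstabB : ∀ k : G, ψ k x = x → φ k y = y := stab_full ψ φ hψ hφ x y hc2 hc1
  -- strict order equivalence of the two orbits
  have hstrict : ∀ g h : G, φ g y < φ h y ↔ ψ g x < ψ h x := by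
    intro g h
    constructor
    · intro hlt
      refine lt_of_le_of_ne (hc1 g h hlt) ?_
      intro heq
      have h1 : ψ (h⁻¹ * g) x = x := by
        rw [act_mul, heq, ← act_mul, inv_mul_cancel, act_one]
      have h2 : φ (h⁻¹ * g) y = y := hstabB _ h1
      rw [act_mul, act_inv] at h2
      have := congrArg (φ h) h2
      rw [OrderIso.apply_symm_apply] at this
      exact absurd this (ne_of_lt hlt)
    · intro hlt
      refine lt_of_le_of_ne (hc2 g h hlt) ?_
      intro heq
      have h1 : φ (h⁻¹ * g) y = y := by
        rw [act_mul, heq, ← act_mul, inv_mul_cancel, act_one]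
      have h2 : ψ (h⁻¹ * g) x = x := hstabA _ h1
      rw [act_mul, act_inv] at h2
      have := congrArg (ψ h) h2
      rw [OrderIso.apply_symm_apply] at this
      exact absurd this (ne_of_lt hlt)
  exact build_conj φ ψ hφ hψ y x hstrict
end

section
/- Let G be a countable group. The conjugacy relation E = {(φ, ψ) ∈ Rep_min(G) × Rep_min(G) : there exists f ∈ Homeo₀(ℝ) with f.φ = ψ} is an F_σ subset (a countable union of closed sets) of Rep_min(G) × Rep_min(G), where Rep_min(G) carries the topology of pointwise convergence. -/
open Topology Filter

/-- The conjugacy (orbit equivalence) relation on the space of minimal actions. -/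
def EminSet (G : Type*) [Group G] : Set (↥(RepMin G) × ↥(RepMin G)) :=
  {p | ∃ f : ℝ ≃o ℝ, conjFun f (p.1 : G → ℝ → ℝ) = (p.2 : G → ℝ → ℝ)}

/-!
If `f` conjugates `φ` to `ψ`, the `ψ`-orbit of `t = f 0` is ordered like the `φ`-orbit of `0`.
Conversely, for such a `t` the map `y ↦ sup {ψ k t | φ k 0 < y}` is a monotone semiconjugacy,
and between minimal actions every monotone semiconjugacy is a conjugacy: minimality of `ψ` gives
it dense range, hence continuity and surjectivity, and minimality of `φ` rules out flat pieces.
The order condition on `t` is closed in `(φ, ψ, t)`, so restricting `t` to the compact sets of a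
cover of `ℝ` and projecting gives the closed sets.
-/

open Set Function

lemma IsCompact.isClosed_setOf_exists_prod_mem {X Y : Type*} [TopologicalSpace X]
    [TopologicalSpace Y] {K : Set Y} (hK : IsCompact K) {S : Set (X × Y)} (hS : IsClosed S) :
    IsClosed {x | ∃ y ∈ K, (x, y) ∈ S} := by
  have := isCompact_iff_compactSpace.mp hK
  convert isClosedMap_fst_of_compactSpace _ (hS.preimage (by fun_prop :
    Continuous fun p : X × K => (p.1, (p.2 : Y)))) using 1
  ext x
  simp

lemma surjective_of_continuous_of_denseRange {X α : Type*} [TopologicalSpace X]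
    [PreconnectedSpace X] [LinearOrder α] [TopologicalSpace α] [OrderTopology α] [NoMinOrder α]
    [NoMaxOrder α] {f : X → α} (hc : Continuous f) (hd : DenseRange f) : Surjective f := by
  intro z
  obtain ⟨a, ha⟩ := hd.exists_mem_open isOpen_Iio (nonempty_Iio (a := z))
  obtain ⟨b, hb⟩ := hd.exists_mem_open isOpen_Ioi (nonempty_Ioi (a := z))
  exact intermediate_value_univ a b hc ⟨le_of_lt ha, le_of_lt hb⟩

section Actions

variable {G : Type*} [Group G]

lemma act_mul_apply (φ : G →* (ℝ ≃o ℝ)) (g h : G) (x : ℝ) : φ (g * h) x = φ g (φ h x) := by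
  simp

lemma act_inv_apply (φ : G →* (ℝ ≃o ℝ)) (g : G) (x : ℝ) : φ g⁻¹ x = (φ g).symm x := by
  rw [map_inv]
  rfl

lemma IsMinimalAction.exists_apply_mem {φ : G →* (ℝ ≃o ℝ)} (hφ : IsMinimalAction φ) (x : ℝ)
    {U : Set ℝ} (hU : IsOpen U) (hne : U.Nonempty) : ∃ g, φ g x ∈ U := by
  obtain ⟨_, hyU, g, rfl⟩ := (hφ x).inter_open_nonempty U hU hne
  exact ⟨g, hyU⟩

lemma conjFun_actMap_eq_iff {φ ψ : G →* (ℝ ≃o ℝ)} {f : ℝ ≃o ℝ} :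
    conjFun f (actMap φ) = actMap ψ ↔ ∀ g x, f (φ g x) = ψ g (f x) := by
  refine ⟨fun h g x => ?_, fun h => ?_⟩
  · simpa [conjFun, actMap] using congrFun (congrFun h g) (f x)
  · funext g x
    simp [conjFun, actMap, h]

end Actions

section Semiconjugacy

variable {G : Type*} [Group G] {φ ψ : G →* (ℝ ≃o ℝ)} {f : ℝ → ℝ}

lemma denseRange_of_semiconj (hψ : IsMinimalAction ψ) (hf : ∀ g x, f (φ g x) = ψ g (f x)) :
    DenseRange f :=
  (hψ (f 0)).mono (by rintro _ ⟨g, rfl⟩; exact ⟨φ g 0, hf g 0⟩)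

lemma injective_of_semiconj (hφ : IsMinimalAction φ) (hmono : Monotone f)
    (hcont : Continuous f) (hrange : DenseRange f) (hf : ∀ g x, f (φ g x) = ψ g (f x)) :
    Injective f := by
  intro x₁ x₂ hx
  by_contra hne
  wlog hlt : x₁ < x₂ generalizing x₁ x₂
  · exact this hx.symm (Ne.symm hne) (lt_of_le_of_ne (not_lt.mp hlt) (Ne.symm hne))
  -- the fibre `P` through `x₁` and `x₂` is an interval `[p, _]`; some `φ γ` moves `p` into
  -- its interior, so `ψ γ` fixes the value of `f` on `P`, and then `φ γ⁻¹ p ∈ P` lies below `p`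
  set c := f x₁
  set P := f ⁻¹' {c}
  obtain ⟨a, ha⟩ := hrange.exists_mem_open isOpen_Iio (nonempty_Iio (a := c))
  have hbdd : BddBelow P := ⟨a, fun y hy => (hmono.reflect_lt (ha.trans_eq hy.symm)).le⟩
  have hpP : sInf P ∈ P := (isClosed_singleton.preimage hcont).csInf_mem ⟨x₁, rfl⟩ hbdd
  set p := sInf P
  have hpc : f p = c := hpP
  have hIcc : Icc p x₂ ⊆ P := fun y hy =>
    le_antisymm (hx ▸ hmono hy.2) (hpc ▸ hmono hy.1)
  obtain ⟨γ, hγ⟩ := hφ.exists_apply_mem p isOpen_Ioo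
    (nonempty_Ioo.2 ((csInf_le hbdd rfl).trans_lt hlt))
  have hfix : ψ γ c = c := by
    rw [← hpc, ← hf]
    exact (hIcc (Ioo_subset_Icc_self hγ)).trans hpc.symm
  have hback : φ γ⁻¹ p ∈ P := by
    change f _ = c
    rw [hf, hpc, act_inv_apply, OrderIso.symm_apply_eq, hfix]
  have := (φ γ).monotone (csInf_le hbdd hback)
  rw [act_inv_apply, OrderIso.apply_symm_apply] at this
  exact this.not_gt hγ.1

lemma exists_orderIso_of_monotone_semiconj (hφ : IsMinimalAction φ) (hψ : IsMinimalAction ψ)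
    (hmono : Monotone f) (hf : ∀ g x, f (φ g x) = ψ g (f x)) :
    ∃ e : ℝ ≃o ℝ, ∀ g x, e (φ g x) = ψ g (e x) := by
  have hrange := denseRange_of_semiconj hψ hf
  have hcont := hmono.continuous_of_denseRange hrange
  have hinj := injective_of_semiconj hφ hmono hcont hrange hf
  exact ⟨StrictMono.orderIsoOfSurjective f (hmono.strictMono_of_injective hinj)
    (surjective_of_continuous_of_denseRange hcont hrange), hf⟩

end Semiconjugacy

section OrbitSup

variable {G : Type*} [Group G]

def OrbitMonotone (φ ψ : G →* (ℝ ≃o ℝ)) (t : ℝ) : Prop :=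
  ∀ g h, φ g 0 < φ h 0 → ψ g t ≤ ψ h t

def orbitBelow (φ ψ : G →* (ℝ ≃o ℝ)) (t y : ℝ) : Set ℝ :=
  (fun k => ψ k t) '' {k | φ k 0 < y}

noncomputable def orbitSup (φ ψ : G →* (ℝ ≃o ℝ)) (t y : ℝ) : ℝ :=
  sSup (orbitBelow φ ψ t y)

variable {φ ψ : G →* (ℝ ≃o ℝ)} {t : ℝ}

lemma orbitBelow_nonempty (hφ : IsMinimalAction φ) (y : ℝ) : (orbitBelow φ ψ t y).Nonempty := by
  obtain ⟨k, hk⟩ := hφ.exists_apply_mem 0 isOpen_Iio (nonempty_Iio (a := y))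
  exact ⟨_, k, hk, rfl⟩

lemma bddAbove_orbitBelow (hφ : IsMinimalAction φ) (H : OrbitMonotone φ ψ t) (y : ℝ) :
    BddAbove (orbitBelow φ ψ t y) := by
  obtain ⟨h, hh⟩ := hφ.exists_apply_mem 0 isOpen_Ioi (nonempty_Ioi (a := y))
  exact ⟨ψ h t, by rintro _ ⟨k, hk, rfl⟩; exact H k h (hk.trans hh)⟩

lemma monotone_orbitSup (hφ : IsMinimalAction φ) (H : OrbitMonotone φ ψ t) :
    Monotone (orbitSup φ ψ t) := fun _ y' hy =>
  csSup_le_csSup (bddAbove_orbitBelow hφ H y') (orbitBelow_nonempty hφ _)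
    (image_mono fun _ hk => lt_of_lt_of_le hk hy)

lemma orbitBelow_apply (g : G) (y : ℝ) :
    orbitBelow φ ψ t (φ g y) = ψ g '' orbitBelow φ ψ t y := by
  ext z
  constructor
  · rintro ⟨k, hk, rfl⟩
    refine ⟨ψ (g⁻¹ * k) t, ⟨g⁻¹ * k, ?_, rfl⟩, by rw [← act_mul_apply, mul_inv_cancel_left]⟩
    change φ (g⁻¹ * k) 0 < y
    rwa [act_mul_apply, act_inv_apply, OrderIso.symm_apply_lt]
  · rintro ⟨_, ⟨k, hk, rfl⟩, rfl⟩
    refine ⟨g * k, ?_, act_mul_apply ψ g k t⟩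
    change φ (g * k) 0 < φ g y
    rwa [act_mul_apply, OrderIso.lt_iff_lt]

lemma orbitSup_apply (hφ : IsMinimalAction φ) (H : OrbitMonotone φ ψ t) (g : G) (y : ℝ) :
    orbitSup φ ψ t (φ g y) = ψ g (orbitSup φ ψ t y) := by
  rw [orbitSup, orbitBelow_apply, orbitSup,
    OrderIso.map_csSup' _ (orbitBelow_nonempty hφ y) (bddAbove_orbitBelow hφ H y)]

lemma exists_conj_iff_exists_orbitMonotone (hφ : IsMinimalAction φ) (hψ : IsMinimalAction ψ) :
    (∃ f : ℝ ≃o ℝ, conjFun f (actMap φ) = actMap ψ) ↔ ∃ t, OrbitMonotone φ ψ t := by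
  simp only [conjFun_actMap_eq_iff]
  constructor
  · rintro ⟨f, hf⟩
    refine ⟨f 0, fun g h hgh => ?_⟩
    rw [← hf, ← hf]
    exact f.monotone hgh.le
  · rintro ⟨t, H⟩
    exact exists_orderIso_of_monotone_semiconj hφ hψ (monotone_orbitSup hφ H) (orbitSup_apply hφ H)

end OrbitSup

section OrbitOrderedAt

variable {G : Type*} [Group G]

/-- For `F₂ = actMap ψ` this says `F₁ g 0 < F₁ h 0 → ψ g t ≤ ψ h t` (`orbitOrderedAt_actMap_iff`).
It is phrased through `F₂ h⁻¹ q` at rational `q` because evaluation at a fixed point is continuous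
for pointwise convergence, whereas `(F₂, t) ↦ F₂ g t` is not. -/
def OrbitOrderedAt (F₁ F₂ : G → ℝ → ℝ) (t : ℝ) : Prop :=
  ∀ (g h : G) (q : ℚ), F₁ g 0 < F₁ h 0 → t < F₂ h⁻¹ q → t ≤ F₂ g⁻¹ q

lemma orbitOrderedAt_actMap_iff {F : G → ℝ → ℝ} {ψ : G →* (ℝ ≃o ℝ)} {t : ℝ} :
    OrbitOrderedAt F (actMap ψ) t ↔ ∀ g h, F g 0 < F h 0 → ψ g t ≤ ψ h t := by
  have key (g h : G) : (∀ q : ℚ, t < ψ h⁻¹ q → t ≤ ψ g⁻¹ q) ↔ ψ g t ≤ ψ h t := by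
    simp only [act_inv_apply, OrderIso.lt_symm_apply, OrderIso.le_symm_apply]
    exact ⟨le_of_forall_lt_rat_imp_le, fun hle q hq => hle.trans hq.le⟩
  exact ⟨fun H g h hgh => (key g h).1 fun q => H g h q hgh,
    fun H g h q hgh => (key g h).2 (H g h hgh) q⟩

lemma isClosed_setOf_orbitOrderedAt :
    IsClosed {p : ((G → ℝ → ℝ) × (G → ℝ → ℝ)) × ℝ | OrbitOrderedAt p.1.1 p.1.2 p.2} := by
  simp only [OrbitOrderedAt, ofPred_forall]
  refine isClosed_iInter fun g => isClosed_iInter fun h => isClosed_iInter fun q => ?_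
  simp only [imp_iff_not_or, not_lt, ofPred_or]
  exact (isClosed_le (by fun_prop) (by fun_prop)).union
    ((isClosed_le (by fun_prop) (by fun_prop)).union (isClosed_le (by fun_prop) (by fun_prop)))

end OrbitOrderedAt

theorem stmt2_general (G : Type*) [Group G] :
    ∃ C : ℕ → Set (↥(RepMin G) × ↥(RepMin G)),
      (∀ n, IsClosed (C n)) ∧ EminSet G = ⋃ n, C n := by
  let val₂ : RepMin G × RepMin G → (G → ℝ → ℝ) × (G → ℝ → ℝ) := fun P => (P.1, P.2)
  refine ⟨fun n => val₂ ⁻¹' {F | ∃ t ∈ compactCovering ℝ n, OrbitOrderedAt F.1 F.2 t},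
    fun n => ?_, ?_⟩
  · exact ((isCompact_compactCovering ℝ n).isClosed_setOf_exists_prod_mem
      isClosed_setOf_orbitOrderedAt).preimage (by fun_prop)
  · ext ⟨⟨_, φ, hφ, rfl⟩, ⟨_, ψ, hψ, rfl⟩⟩
    simp only [EminSet, mem_ofPred_eq, mem_iUnion, mem_preimage, val₂,
      exists_conj_iff_exists_orbitMonotone hφ hψ, orbitOrderedAt_actMap_iff]
    exact ⟨fun ⟨t, H⟩ => (exists_mem_compactCovering t).imp fun _ ht => ⟨t, ht, H⟩,
      fun ⟨_, t, _, H⟩ => ⟨t, H⟩⟩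

theorem stmt2 (G : Type*) [Group G] [Countable G] :
    ∃ C : ℕ → Set (↥(RepMin G) × ↥(RepMin G)),
      (∀ n, IsClosed (C n)) ∧ EminSet G = ⋃ n, C n :=
  stmt2_general G
end

section
/- Let G be a countable group. If G admits no minimal proximal action on the real line, then G belongs to the class C. -/
open Topology Filter

/-- A proximal action. -/
def IsProximalAction {G : Type*} [Group G] (φ : G →* (ℝ ≃o ℝ)) : Prop :=
  ∀ x y : ℝ, ∃ z : ℝ, ∃ u : ℕ → G,
    Tendsto (fun n => φ (u n) x) atTop (𝓝 z) ∧ Tendsto (fun n => φ (u n) y) atTop (𝓝 z)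

/-!
A minimal action `F` is encoded by its descent type: the finite sets `P ⊆ G` such that
`F g x ≤ x` for all `g ∈ P` and all `x` in some open interval. It is a conjugacy invariant, and it
is Borel in `F` because, by continuity, it suffices to test rational points of rational intervals;
as `G` has countably many finite subsets, this gives a Borel map to `ℝ`.

Conversely, let `φ`, `ψ` be minimal with `ψ` not proximal and the descent type of `φ` contained
in that of `ψ`. For a Baire-generic `x₀`, every finite subset of `D = {g | φ g x₀ ≤ x₀}` lies in
the descent type of `φ`, hence moves some point down under `ψ`. If some `ψ b` moves points both up
and down, `ψ` has a proximal pair of distinct points, and non-proximality produces a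
fixed-point-free homeomorphism `T` commuting with `ψ`; compactness of a fundamental domain of `T`
then gives `y₀` with `ψ g y₀ ≤ y₀` for all `g ∈ D`. Otherwise any `y₀` does. The orbit map
`φ g x₀ ↦ ψ g y₀` is then monotone and extends to a conjugacy.
-/

open Set

section Minimal

variable {G : Type*} [Group G]

lemma map_mul_apply (φ : G →* (ℝ ≃o ℝ)) (a b : G) (x : ℝ) : φ (a * b) x = φ a (φ b x) := by
  rw [map_mul, RelIso.mul_apply]

@[simp]
lemma map_inv_apply_apply (φ : G →* (ℝ ≃o ℝ)) (a : G) (x : ℝ) : φ a⁻¹ (φ a x) = x := by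
  rw [map_inv, RelIso.inv_apply_self]

@[simp]
lemma map_apply_inv_apply (φ : G →* (ℝ ≃o ℝ)) (a : G) (x : ℝ) : φ a (φ a⁻¹ x) = x := by
  rw [map_inv, RelIso.apply_inv_self]

variable {φ ψ : G →* (ℝ ≃o ℝ)}

lemma IsMinimalAction.eq_univ_of_isClosed (hφ : IsMinimalAction φ) {S : Set ℝ}
    (hS : IsClosed S) (hinv : ∀ g, ∀ x ∈ S, φ g x ∈ S) (hne : S.Nonempty) : S = univ := by
  obtain ⟨x, hx⟩ := hne
  have horbit : {y | ∃ g, φ g x = y} ⊆ S := by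
    rintro y ⟨g, rfl⟩
    exact hinv g x hx
  exact hS.closure_eq ▸ ((hφ x).mono horbit).closure_eq

lemma IsMinimalAction.eq_univ_of_isOpen (hφ : IsMinimalAction φ) {U : Set ℝ}
    (hU : IsOpen U) (hinv : ∀ g, ∀ x ∈ U, φ g x ∈ U) (hne : U.Nonempty) : U = univ := by
  by_contra hne'
  have hcompl : Uᶜ = univ := by
    refine hφ.eq_univ_of_isClosed hU.isClosed_compl (fun g x hx hgx => hx ?_)
      (nonempty_compl.mpr hne')
    simpa using hinv g⁻¹ _ hgx
  exact hne.ne_empty (compl_univ_iff.mp hcompl)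

/-- By minimality the translates of the interval cover the line. -/
lemma IsMinimalAction.isLocallyConstant_of_semiconj (hφ : IsMinimalAction φ) {m : ℝ → ℝ}
    (hequiv : ∀ g x, m (φ g x) = ψ g (m x)) {a b c : ℝ} (hab : a < b)
    (hc : ∀ s ∈ Ioo a b, m s = c) : IsLocallyConstant m := by
  set U := ⋃ g, φ g '' Ioo a b
  have hU : U = univ := by
    refine hφ.eq_univ_of_isOpen
      (isOpen_iUnion fun g => (φ g).toHomeomorph.isOpenMap _ isOpen_Ioo) ?_
      ⟨φ 1 ((a + b) / 2), mem_iUnion.mpr ⟨1, _, ⟨by linarith, by linarith⟩, rfl⟩⟩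
    rintro g x hx
    obtain ⟨h, s, hs, rfl⟩ := mem_iUnion.mp hx
    exact mem_iUnion.mpr ⟨g * h, s, hs, map_mul_apply φ g h s⟩
  rw [IsLocallyConstant.iff_exists_open]
  intro x
  obtain ⟨g, s, hs, rfl⟩ := mem_iUnion.mp (hU.symm ▸ mem_univ x : x ∈ U)
  refine ⟨φ g '' Ioo a b, (φ g).toHomeomorph.isOpenMap _ isOpen_Ioo, ⟨s, hs, rfl⟩, ?_⟩
  rintro _ ⟨s', hs', rfl⟩
  rw [hequiv, hequiv, hc s hs, hc s' hs']

lemma IsMinimalAction.exists_orderIso_of_semiconj (hφ : IsMinimalAction φ) {m : ℝ → ℝ}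
    (hm : Monotone m) (hdense : DenseRange m) (hequiv : ∀ g x, m (φ g x) = ψ g (m x)) :
    ∃ f : ℝ ≃o ℝ, ⇑f = m := by
  have hstrict : StrictMono m := by
    intro a b hab
    by_contra hle
    have hconst : ∀ s ∈ Ioo a b, m s = m a := fun s hs =>
      le_antisymm ((hm hs.2.le).trans (not_lt.mp hle)) (hm hs.1.le)
    have hm0 := (hφ.isLocallyConstant_of_semiconj hequiv hab hconst).eq_const 0
    obtain ⟨_, ⟨x, rfl⟩, hx⟩ := hdense.exists_gt (m 0)
    exact hx.ne (congrFun hm0 x).symm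
  have hsurj : Function.Surjective m :=
    (hm.continuous_of_denseRange hdense).surjective
      (hm.tendsto_atTop_atTop fun b => by
        obtain ⟨_, ⟨x, rfl⟩, hx⟩ := hdense.exists_gt b
        exact ⟨x, hx.le⟩)
      (hm.tendsto_atBot_atBot fun b => by
        obtain ⟨_, ⟨x, rfl⟩, hx⟩ := hdense.exists_lt b
        exact ⟨x, hx.le⟩)
  exact ⟨hstrict.orderIsoOfSurjective m hsurj, rfl⟩

end Minimal

section Conjugacy

variable {G : Type*} [Group G] {φ ψ : G →* (ℝ ≃o ℝ)}

lemma conjFun_eq_of_semiconj {f : ℝ ≃o ℝ} (hf : ∀ g x, f (φ g x) = ψ g (f x)) :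
    conjFun f (actMap φ) = actMap ψ := by
  funext g x
  simp only [conjFun, actMap, hf, OrderIso.apply_symm_apply]

/-- The orbit map `φ g x₀ ↦ ψ g y₀` is monotone, and its upper envelope
`x ↦ sup {ψ g y₀ | φ g x₀ ≤ x}` is the conjugacy. -/
theorem exists_conj_of_apply_le_imp (hφ : IsMinimalAction φ) (hψ : IsMinimalAction ψ)
    {x₀ y₀ : ℝ} (h : ∀ g, φ g x₀ ≤ x₀ → ψ g y₀ ≤ y₀) :
    ∃ f : ℝ ≃o ℝ, conjFun f (actMap φ) = actMap ψ := by
  have horbit : ∀ g k, φ g x₀ ≤ φ k x₀ → ψ g y₀ ≤ ψ k y₀ := by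
    intro g k hgk
    have := h (k⁻¹ * g) (by simpa [map_mul_apply] using (φ k⁻¹).monotone hgk)
    rw [map_mul_apply] at this
    simpa using (ψ k).monotone this
  set S : ℝ → Set ℝ := fun x => (fun g => ψ g y₀) '' {g | φ g x₀ ≤ x}
  have hne : ∀ x, (S x).Nonempty := fun x => by
    obtain ⟨_, ⟨g, rfl⟩, hg⟩ := (hφ x₀).exists_lt x
    exact ⟨_, g, hg.le, rfl⟩
  have hbdd : ∀ x, BddAbove (S x) := fun x => by
    obtain ⟨_, ⟨k, rfl⟩, hk⟩ := (hφ x₀).exists_gt x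
    exact ⟨ψ k y₀, by rintro _ ⟨g, hg, rfl⟩; exact horbit g k (le_of_lt (lt_of_le_of_lt hg hk))⟩
  set m : ℝ → ℝ := fun x => sSup (S x)
  have hm_orbit : ∀ g, m (φ g x₀) = ψ g y₀ := fun g =>
    IsGreatest.csSup_eq ⟨⟨g, le_refl (φ g x₀), rfl⟩, by rintro _ ⟨k, hk, rfl⟩; exact horbit k g hk⟩
  have hm : Monotone m := fun a b hab =>
    csSup_le_csSup (hbdd b) (hne a) (image_mono fun g hg => le_trans hg hab)
  have hequiv : ∀ g x, m (φ g x) = ψ g (m x) := by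
    intro g x
    have hS : S (φ g x) = ψ g '' S x := by
      ext w
      constructor
      · rintro ⟨k, hk, rfl⟩
        refine ⟨ψ (g⁻¹ * k) y₀, ⟨g⁻¹ * k, ?_, rfl⟩, by rw [map_mul_apply, map_apply_inv_apply]⟩
        simpa [map_mul_apply] using (φ g⁻¹).monotone hk
      · rintro ⟨_, ⟨k, hk, rfl⟩, rfl⟩
        exact ⟨g * k, by simpa [map_mul_apply] using (φ g).monotone hk, map_mul_apply ψ g k y₀⟩
    simp only [m, hS, (ψ g).map_csSup' (hne x) (hbdd x)]
  have hdense : DenseRange m :=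
    (hψ y₀).mono (by rintro _ ⟨g, rfl⟩; exact ⟨_, hm_orbit g⟩)
  obtain ⟨f, hf⟩ := hφ.exists_orderIso_of_semiconj hm hdense hequiv
  exact ⟨f, conjFun_eq_of_semiconj fun g x => by rw [hf, hequiv]⟩

end Conjugacy

section Proximal

variable {G : Type*} [Group G] {φ : G →* (ℝ ≃o ℝ)}

def IsProximalPair (φ : G →* (ℝ ≃o ℝ)) (x y : ℝ) : Prop :=
  ∃ z : ℝ, ∃ u : ℕ → G,
    Tendsto (fun n => φ (u n) x) atTop (𝓝 z) ∧ Tendsto (fun n => φ (u n) y) atTop (𝓝 z)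

lemma isProximalAction_iff : IsProximalAction φ ↔ ∀ x y, IsProximalPair φ x y := Iff.rfl

lemma IsProximalPair.refl (x : ℝ) : IsProximalPair φ x x :=
  ⟨x, fun _ => 1, by simp, by simp⟩

lemma IsProximalPair.symm {x y : ℝ} (h : IsProximalPair φ x y) : IsProximalPair φ y x :=
  let ⟨z, u, hx, hy⟩ := h; ⟨z, u, hy, hx⟩

lemma IsProximalPair.of_le_of_le {x y a b : ℝ} (h : IsProximalPair φ x y)
    (hxa : x ≤ a) (hab : a ≤ b) (hby : b ≤ y) : IsProximalPair φ a b := by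
  obtain ⟨z, u, hx, hy⟩ := h
  refine ⟨z, u, ?_, ?_⟩ <;> refine tendsto_of_tendsto_of_tendsto_of_le_of_le hx hy
    (fun n => (φ (u n)).monotone ?_) (fun n => (φ (u n)).monotone ?_) <;> linarith

lemma IsProximalPair.map {x y : ℝ} (h : IsProximalPair φ x y) (g : G) :
    IsProximalPair φ (φ g x) (φ g y) := by
  obtain ⟨z, u, hx, hy⟩ := h
  refine ⟨z, fun n => u n * g⁻¹, ?_, ?_⟩ <;> simpa [map_mul_apply]

lemma isProximalPair_map_iff {x y : ℝ} (g : G) :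
    IsProximalPair φ (φ g x) (φ g y) ↔ IsProximalPair φ x y :=
  ⟨fun h => by simpa using h.map g⁻¹, fun h => h.map g⟩

lemma isProximalPair_apply_of_tendsto_pow {b : G} {x z : ℝ}
    (h : Tendsto (fun n => φ (b ^ n) x) atTop (𝓝 z)) : IsProximalPair φ x (φ b x) := by
  refine ⟨z, fun n => b ^ n, h, ?_⟩
  simpa only [← map_mul_apply, ← pow_succ] using (tendsto_add_atTop_iff_nat 1).mpr h

/-- The iterates of `w` under `b` (if `w ≤ c`) or under `b⁻¹` (if `c < w`) are monotone and
bounded by `c`, hence converge. -/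
lemma exists_isProximalPair_of_apply_le_of_lt_apply {b : G} {c w : ℝ} (hc : φ b c ≤ c)
    (hw : w < φ b w) : ∃ x y, x < y ∧ IsProximalPair φ x y := by
  rcases le_or_gt w c with hwc | hcw
  · have hmono : Monotone fun n => φ (b ^ n) w := monotone_nat_of_le_succ fun n => by
      simpa [pow_succ, map_mul_apply] using (φ (b ^ n)).monotone hw.le
    have hbdd : ∀ n, φ (b ^ n) w ≤ c := fun n => by
      induction n with
      | zero => simpa using hwc
      | succ n ih => rw [pow_succ', map_mul_apply]; exact ((φ b).monotone ih).trans hc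
    exact ⟨w, φ b w, hw, isProximalPair_apply_of_tendsto_pow
      (tendsto_atTop_ciSup hmono ⟨c, by rintro _ ⟨n, rfl⟩; exact hbdd n⟩)⟩
  · have hc' : c ≤ φ b⁻¹ c := by simpa using (φ b⁻¹).monotone hc
    have hw' : φ b⁻¹ w < w := by simpa using (φ b⁻¹).strictMono hw
    have hanti : Antitone fun n => φ (b⁻¹ ^ n) w := antitone_nat_of_succ_le fun n => by
      simpa [pow_succ, map_mul_apply] using (φ (b⁻¹ ^ n)).monotone hw'.le
    have hbdd : ∀ n, c ≤ φ (b⁻¹ ^ n) w := fun n => by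
      induction n with
      | zero => simpa using hcw.le
      | succ n ih => rw [pow_succ', map_mul_apply]; exact hc'.trans ((φ b⁻¹).monotone ih)
    exact ⟨φ b⁻¹ w, w, hw', (isProximalPair_apply_of_tendsto_pow
      (tendsto_atTop_ciInf hanti ⟨c, by rintro _ ⟨n, rfl⟩; exact hbdd n⟩)).symm⟩

end Proximal

section Translation

variable {G : Type*} [Group G] {φ : G →* (ℝ ≃o ℝ)}

lemma IsMinimalAction.bddAbove_isProximalPair (hφ : IsMinimalAction φ)
    (hnp : ¬ IsProximalAction φ) (x : ℝ) : BddAbove {y | IsProximalPair φ x y} := by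
  by_contra hunbdd
  refine hnp (isProximalAction_iff.mpr ?_)
  have hle : ∀ a b, a ≤ b → IsProximalPair φ a b := by
    intro a b hab
    obtain ⟨_, ⟨g, rfl⟩, hg⟩ := (hφ a).exists_gt x
    obtain ⟨v, hv, hbv⟩ := not_bddAbove_iff.mp hunbdd (φ g b)
    exact (isProximalPair_map_iff g).mp (hv.of_le_of_le hg.le ((φ g).monotone hab) hbv.le)
  intro a b
  rcases le_total a b with hab | hba
  · exact hle a b hab
  · exact (hle b a hba).symm

/-- For a minimal non-proximal action, `T x = sup {y | (x, y) is proximal}` is a homeomorphism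
commuting with the action; it has no fixed point since its fixed points form a closed invariant
set. -/
theorem IsMinimalAction.exists_commute_lt_apply (hφ : IsMinimalAction φ)
    (hnp : ¬ IsProximalAction φ) {x₁ y₁ : ℝ} (hxy : x₁ < y₁) (hp : IsProximalPair φ x₁ y₁) :
    ∃ T : ℝ ≃o ℝ, (∀ g, Commute (φ g) T) ∧ ∀ x, x < T x := by
  set C : ℝ → Set ℝ := fun x => {y | IsProximalPair φ x y}
  have hne : ∀ x, (C x).Nonempty := fun x => ⟨x, .refl x⟩
  have hbdd := hφ.bddAbove_isProximalPair hnp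
  set T : ℝ → ℝ := fun x => sSup (C x)
  have hle : ∀ x, x ≤ T x := fun x => le_csSup (hbdd x) (.refl x)
  have hmono : Monotone T := by
    intro a c hac
    refine csSup_le (hne a) fun y hy => ?_
    rcases le_total y c with hyc | hcy
    · exact hyc.trans (hle c)
    · exact le_csSup (hbdd c) (hy.of_le_of_le hac hcy le_rfl)
  have hequiv : ∀ g x, T (φ g x) = φ g (T x) := by
    intro g x
    have hC : C (φ g x) = φ g '' C x := by
      ext y
      constructor
      · intro hy
        have : IsProximalPair φ x (φ g⁻¹ y) := by simpa only [map_inv_apply_apply] using hy.map g⁻¹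
        exact ⟨φ g⁻¹ y, this, by simp⟩
      · rintro ⟨v, hv, rfl⟩
        exact hv.map g
    simp only [T, hC, (φ g).map_csSup' (hne x) (hbdd x)]
  have hdense : DenseRange T :=
    (hφ (T x₁)).mono (by rintro _ ⟨g, rfl⟩; exact ⟨_, hequiv g x₁⟩)
  obtain ⟨f, hf⟩ := hφ.exists_orderIso_of_semiconj hmono hdense hequiv
  have hfree : ∀ x, f x ≠ x := by
    intro x hx
    have huniv := hφ.eq_univ_of_isClosed
      (isClosed_eq f.continuous continuous_id : IsClosed {x | f x = x})
      (fun g x (hx : f x = x) => show f (φ g x) = φ g x by rw [hf, hequiv, ← hf, hx]) ⟨x, hx⟩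
    have hx₁ : f x₁ = x₁ := (huniv ▸ mem_univ x₁ : x₁ ∈ {x | f x = x})
    have : y₁ ≤ f x₁ := hf ▸ le_csSup (hbdd x₁) hp
    linarith
  refine ⟨f, fun g => DFunLike.ext _ _ fun x => ?_, fun x => (hf ▸ hle x).lt_of_ne (hfree x).symm⟩
  simp only [RelIso.mul_apply, hf, hequiv]

end Translation

section Descent

variable {G : Type*}

def descentSet (F : G → ℝ → ℝ) (P : Finset G) : Set ℝ := {x | ∀ g ∈ P, F g x ≤ x}

def descentType (F : G → ℝ → ℝ) : Set (Finset G) := {P | (interior (descentSet F P)).Nonempty}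

lemma descentSet_conjFun (f : ℝ ≃o ℝ) (F : G → ℝ → ℝ) (P : Finset G) :
    descentSet (conjFun f F) P = f '' descentSet F P := by
  ext x
  rw [f.image_eq_preimage_symm]
  simp [descentSet, conjFun, ← OrderIso.le_symm_apply]

lemma descentType_conjFun (f : ℝ ≃o ℝ) (F : G → ℝ → ℝ) :
    descentType (conjFun f F) = descentType F := by
  ext P
  simp only [descentType, mem_ofPred_eq, descentSet_conjFun]
  rw [← f.coe_toHomeomorph, ← f.toHomeomorph.image_interior, image_nonempty]

lemma isClosed_descentSet {F : G → ℝ → ℝ} (hF : ∀ g, Continuous (F g)) (P : Finset G) :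
    IsClosed (descentSet F P) := by
  simp only [descentSet, ofPred_forall]
  exact isClosed_biInter fun g _ => isClosed_le (hF g) continuous_id

lemma IsClosed.interior_nonempty_iff_exists_rat {S : Set ℝ} (hS : IsClosed S) :
    (interior S).Nonempty ↔ ∃ a b : ℚ, a < b ∧ ∀ q : ℚ, (q : ℝ) ∈ Ioo (a : ℝ) b → (q : ℝ) ∈ S := by
  constructor
  · rintro ⟨x, hx⟩
    obtain ⟨l, u, ⟨hlx, hxu⟩, hsub⟩ :=
      mem_nhds_iff_exists_Ioo_subset.mp (isOpen_interior.mem_nhds hx)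
    obtain ⟨a, hla, hax⟩ := exists_rat_btwn hlx
    obtain ⟨b, hxb, hbu⟩ := exists_rat_btwn hxu
    refine ⟨a, b, by exact_mod_cast hax.trans hxb, fun q hq => interior_subset (hsub ?_)⟩
    exact ⟨hla.trans hq.1, hq.2.trans hbu⟩
  · rintro ⟨a, b, hab, hS'⟩
    have hIoo : Ioo (a : ℝ) b ⊆ S := by
      refine (Rat.denseRange_cast.open_subset_closure_inter isOpen_Ioo).trans
        (closure_minimal ?_ hS)
      rintro _ ⟨hq, q, rfl⟩
      exact hS' q hq
    exact ((nonempty_Ioo.mpr (by exact_mod_cast hab)).mono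
      (interior_maximal hIoo isOpen_Ioo))

lemma measurableSet_descentType [Group G] (P : Finset G) :
    MeasurableSet {F : RepMin G | P ∈ descentType (F : G → ℝ → ℝ)} := by
  have hset : {F : RepMin G | P ∈ descentType (F : G → ℝ → ℝ)} =
      ⋃ (a : ℚ) (b : ℚ) (_ : a < b), ⋂ (q : ℚ) (_ : (q : ℝ) ∈ Ioo (a : ℝ) b), ⋂ g ∈ P,
        {F : RepMin G | (F : G → ℝ → ℝ) g q ≤ q} := by
    ext ⟨F, φ, -, rfl⟩
    rw [mem_ofPred_eq, descentType, mem_ofPred_eq, (isClosed_descentSet (F := actMap φ)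
      (fun g => (φ g).continuous) P).interior_nonempty_iff_exists_rat]
    simp only [mem_iUnion, mem_iInter, exists_prop]
    rfl
  rw [hset]
  refine MeasurableSet.iUnion fun a => MeasurableSet.iUnion fun b => MeasurableSet.iUnion
    fun _ => MeasurableSet.iInter fun q => MeasurableSet.iInter fun _ =>
      Finset.measurableSet_biInter P fun g _ => measurableSet_le ?_ measurable_const
  exact (measurable_pi_apply _).comp ((measurable_pi_apply g).comp measurable_subtype_coe)

end Descent

section FundamentalDomain

variable {T : ℝ ≃o ℝ}

lemma exists_lt_pow_apply (hT : ∀ x, x < T x) (x M : ℝ) : ∃ n : ℕ, M < (T ^ n) x := by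
  have hmono : Monotone fun n : ℕ => (T ^ n) x := monotone_nat_of_le_succ fun n => by
    rw [pow_succ', RelIso.mul_apply]
    exact (hT _).le
  rcases tendsto_atTop_of_monotone hmono with htop | ⟨L, hL⟩
  · exact (htop.eventually_gt_atTop M).exists
  · have h₁ : Tendsto (fun n : ℕ => T ((T ^ n) x)) atTop (𝓝 (T L)) :=
      (T.continuous.tendsto L).comp hL
    have h₂ : Tendsto (fun n : ℕ => T ((T ^ n) x)) atTop (𝓝 L) := by
      simpa only [← RelIso.mul_apply, ← pow_succ'] using (tendsto_add_atTop_iff_nat 1).mpr hL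
    exact absurd (tendsto_nhds_unique h₁ h₂) (hT L).ne'

lemma exists_zpow_apply_mem_Ico (hT : ∀ x, x < T x) (c x : ℝ) :
    ∃ m : ℤ, (T ^ m) x ∈ Ico c (T c) := by
  have hsucc : ∀ m : ℤ, (T ^ (m + 1)) x = T ((T ^ m) x) := fun m => by
    rw [add_comm, zpow_one_add, RelIso.mul_apply]
  have hstrict : StrictMono fun m : ℤ => (T ^ m) x :=
    strictMono_int_of_lt_succ fun m => by simp only [hsucc]; exact hT _
  obtain ⟨n, hn⟩ := exists_lt_pow_apply hT x c
  obtain ⟨k, hk⟩ := exists_lt_pow_apply hT c x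
  have hk' : (T ^ (-(k : ℤ))) x < c := by
    simpa [zpow_neg, RelIso.inv_apply_self] using (T ^ k)⁻¹.strictMono hk
  obtain ⟨m, hm, hleast⟩ := Int.exists_least_of_bdd
    ⟨-(k : ℤ), fun m hm => (hstrict.lt_iff_lt.mp (hk'.trans_le hm)).le⟩
    ⟨(n : ℤ), by simpa using hn.le⟩
  have hprev : (T ^ (m - 1)) x < c := not_le.mp fun h => by linarith [hleast _ h]
  refine ⟨m, hm, ?_⟩
  calc (T ^ m) x = T ((T ^ (m - 1)) x) := by rw [← hsucc, sub_add_cancel]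
    _ < T c := T.strictMono hprev

end FundamentalDomain

section CommonDescent

variable {G : Type*} [Group G] {φ ψ : G →* (ℝ ≃o ℝ)}

lemma zpow_apply_mem_descentSet {T : ℝ ≃o ℝ} (hT : ∀ g, Commute (ψ g) T) {P : Finset G}
    {x : ℝ} (hx : x ∈ descentSet (actMap ψ) P) (m : ℤ) :
    (T ^ m) x ∈ descentSet (actMap ψ) P := fun g hg => by
  have hcomm := DFunLike.congr_fun ((hT g).zpow_right m).eq x
  simp only [RelIso.mul_apply] at hcomm
  simpa only [actMap, hcomm] using (T ^ m).monotone (hx g hg)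

/-- In the presence of a fixed-point-free commuting `T`, every descent set is `T`-invariant and
hence meets the compact fundamental domain `[0, T 0]`; otherwise every element that moves some
point down moves every point down. -/
theorem IsMinimalAction.exists_forall_apply_le (hψ : IsMinimalAction ψ)
    (hnp : ¬ IsProximalAction ψ) {D : Set G}
    (hD : ∀ P : Finset G, ↑P ⊆ D → (descentSet (actMap ψ) P).Nonempty) :
    ∃ y, ∀ g ∈ D, ψ g y ≤ y := by
  by_cases hcross : ∃ b c w, ψ b c ≤ c ∧ w < ψ b w
  · obtain ⟨b, c, w, hc, hw⟩ := hcross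
    obtain ⟨x₁, y₁, hxy, hp⟩ := exists_isProximalPair_of_apply_le_of_lt_apply hc hw
    obtain ⟨T, hcomm, hT⟩ := hψ.exists_commute_lt_apply hnp hxy hp
    obtain ⟨y, -, hy⟩ := isCompact_Icc.inter_iInter_nonempty (fun g : D => {y | ψ g y ≤ y})
      (fun g => isClosed_le (ψ g).continuous continuous_id) fun u => by
        obtain ⟨x, hx⟩ := hD (u.map (Function.Embedding.subtype _)) (by simp)
        obtain ⟨m, hm⟩ := exists_zpow_apply_mem_Ico hT 0 x
        refine ⟨(T ^ m) x, Ico_subset_Icc_self hm, mem_iInter₂.mpr fun g hg => ?_⟩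
        exact zpow_apply_mem_descentSet hcomm hx m g (Finset.mem_map_of_mem _ hg)
    exact ⟨y, fun g hg => mem_iInter.mp hy ⟨g, hg⟩⟩
  · push Not at hcross
    refine ⟨0, fun g hg => ?_⟩
    obtain ⟨c, hc⟩ := hD {g} (by simpa using hg)
    exact hcross g c 0 (hc g (Finset.mem_singleton_self g))

/-- Baire category: avoid the nowhere dense frontiers of the countably many closed sets
`{x | φ g x ≤ x}`. -/
lemma exists_forall_mem_interior_of_apply_le [Countable G] (φ : G →* (ℝ ≃o ℝ)) :
    ∃ x₀, ∀ g, φ g x₀ ≤ x₀ → x₀ ∈ interior {x | φ g x ≤ x} := by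
  have hdense : Dense (⋂ g, (frontier {x | φ g x ≤ x})ᶜ) :=
    dense_iInter_of_isOpen (fun g => isClosed_frontier.isOpen_compl) fun g => by
      rw [← interior_eq_empty_iff_dense_compl]
      exact interior_frontier (isClosed_le (φ g).continuous continuous_id)
  obtain ⟨x₀, hx₀⟩ := hdense.nonempty
  exact ⟨x₀, fun g hg => by_contra fun hint => mem_iInter.mp hx₀ g ⟨subset_closure hg, hint⟩⟩

theorem exists_conj_of_descentType_subset [Countable G] (hφ : IsMinimalAction φ)
    (hψ : IsMinimalAction ψ) (hnp : ¬ IsProximalAction ψ)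
    (h : descentType (actMap φ) ⊆ descentType (actMap ψ)) :
    ∃ f : ℝ ≃o ℝ, conjFun f (actMap φ) = actMap ψ := by
  obtain ⟨x₀, hx₀⟩ := exists_forall_mem_interior_of_apply_le φ
  have hD : ∀ P : Finset G, ↑P ⊆ {g | φ g x₀ ≤ x₀} → (descentSet (actMap ψ) P).Nonempty := by
    intro P hP
    have hinter : ⋂ g ∈ P, interior {x | φ g x ≤ x} ⊆ interior (descentSet (actMap φ) P) :=
      interior_maximal
        (fun x hx g hg => interior_subset (s := {x | φ g x ≤ x}) (mem_iInter₂.mp hx g hg))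
        (isOpen_biInter_finset fun g _ => isOpen_interior)
    exact (h ⟨x₀, hinter (mem_iInter₂.mpr fun g hg => hx₀ g (hP hg))⟩).mono interior_subset
  obtain ⟨y₀, hy₀⟩ := hψ.exists_forall_apply_le hnp hD
  exact exists_conj_of_apply_le_imp hφ hψ hy₀

end CommonDescent

theorem stmt3 (G : Type*) [Group G] [Countable G]
    (h : ∀ φ : G →* (ℝ ≃o ℝ), IsMinimalAction φ → ¬ IsProximalAction φ) :
    ClassC G := by
  classical
  obtain ⟨ι, hι⟩ := MeasureTheory.exists_measurableEmbedding_real (Finset G → Bool)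
  refine ⟨fun F => ι fun P => decide (P ∈ descentType (F : G → ℝ → ℝ)), ?_, ?_⟩
  · exact hι.measurable.comp (measurable_pi_lambda _ fun P =>
      measurable_to_bool (by
        simpa only [preimage, mem_singleton_iff, decide_eq_true_eq] using
          measurableSet_descentType P))
  · rintro ⟨_, φ, hφ, rfl⟩ ⟨_, ψ, hψ, rfl⟩
    rw [hι.injective.eq_iff]
    simp only [funext_iff (f := fun P => decide (P ∈ _)), decide_eq_decide, ← Set.ext_iff]
    constructor
    · intro heq
      exact exists_conj_of_descentType_subset hφ hψ (h ψ hψ) heq.subset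
    · rintro ⟨f, hf⟩
      rw [← hf, descentType_conjFun]
end

section
/- Let G be a countable group, let φ be a minimal action of G on the line, and let H be a commensurated subgroup of G. If the restriction of φ to H has a global fixed point (there exists x ∈ ℝ with φ(h)(x) = x for all h ∈ H), then φ(h) is the identity of ℝ for every h ∈ H. -/
open Topology Filter

/-- `H` is a commensurated subgroup of `G`: for every `g`, `H ∩ gHg⁻¹` has finite index
in both `H` and `gHg⁻¹`. -/
def Commensurated {G : Type*} [Group G] (H : Subgroup G) : Prop :=
  ∀ g : G, Subgroup.Commensurable H (Subgroup.map (MulAut.conj g).toMonoidHom H)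

/-!
The common fixed points of `H` form a closed set. Commensuration makes this set invariant
under all of `G`: if `z` is fixed by `H` and `h ∈ H`, then some power `(g⁻¹hg)ⁿ` with `n > 0` lies
in `H`, so `hⁿ` fixes `g z`, and an order-preserving map of the line with a periodic point fixes
it. A nonempty closed invariant set of a minimal action contains a dense orbit, so it is all of `ℝ`.
-/

theorem OrderIso.pow_apply_eq_self_iff {α : Type*} [LinearOrder α] (f : α ≃o α) {n : ℕ}
    (hn : 0 < n) {x : α} : (f ^ n) x = x ↔ f x = x := by
  have hiter : (f ^ n) x = f^[n] x := (smul_iterate_apply f n x).symm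
  simpa only [hiter, Function.iterate_id, id] using
    (Function.Commute.id_right (f := f)).iterate_pos_eq_iff_map_eq f.monotone strictMono_id hn

section CommonFixedPoints

variable {G α : Type*} [Group G] [LinearOrder α]

def commonFixedPoints (φ : G →* (α ≃o α)) (H : Subgroup G) : Set α :=
  {x | ∀ h ∈ H, φ h x = x}

theorem Commensurated.mapsTo_commonFixedPoints {H : Subgroup G} (hH : Commensurated H)
    (φ : G →* (α ≃o α)) (g : G) :
    Set.MapsTo (φ g) (commonFixedPoints φ H) (commonFixedPoints φ H) := by
  intro z hz h hh
  have hconj : MulAut.conj g⁻¹ h ∈ H.map (MulAut.conj g⁻¹).toMonoidHom := ⟨h, hh, rfl⟩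
  obtain ⟨n, hn, -, hpow⟩ := Subgroup.exists_pow_mem_of_relIndex_ne_zero (hH g⁻¹).1 hconj
  rw [← map_pow] at hpow
  have hfix := congrArg (φ g) (hz _ hpow.1)
  rw [← OrderIso.pow_apply_eq_self_iff _ hn, ← map_pow]
  simpa [MulAut.conj_apply, RelIso.mul_apply] using hfix

theorem isClosed_commonFixedPoints [TopologicalSpace α] [OrderTopology α]
    (φ : G →* (α ≃o α)) (H : Subgroup G) : IsClosed (commonFixedPoints φ H) := by
  simp only [commonFixedPoints, Set.ofPred_forall]
  exact isClosed_biInter fun h _ => isClosed_eq (φ h).continuous continuous_id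

end CommonFixedPoints

theorem stmt4_general (G : Type*) [Group G]
    (φ : G →* (ℝ ≃o ℝ)) (hφ : IsMinimalAction φ)
    (H : Subgroup G) (hH : Commensurated H)
    (hfix : ∃ x : ℝ, ∀ h ∈ H, φ h x = x) :
    ∀ h ∈ H, ∀ y : ℝ, φ h y = y := by
  obtain ⟨x, hx⟩ := hfix
  have hdense : Dense (commonFixedPoints φ H) := by
    refine (hφ x).mono ?_
    rintro _ ⟨g, rfl⟩
    exact hH.mapsTo_commonFixedPoints φ g hx
  have huniv : commonFixedPoints φ H = Set.univ := by
    rw [← (isClosed_commonFixedPoints φ H).closure_eq, hdense.closure_eq]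
  intro h hh y
  exact Set.eq_univ_iff_forall.1 huniv y h hh

theorem stmt4 (G : Type*) [Group G] [Countable G]
    (φ : G →* (ℝ ≃o ℝ)) (hφ : IsMinimalAction φ)
    (H : Subgroup G) (hH : Commensurated H)
    (hfix : ∃ x : ℝ, ∀ h ∈ H, φ h x = x) :
    ∀ h ∈ H, ∀ y : ℝ, φ h y = y :=
  stmt4_general G φ hφ H hH hfix
end

section
/- Let G be a countable group, φ a minimal action of G on the line, and H a commensurated subgroup of G such that the restriction of φ to H has no global fixed point. Let ν be a nonzero Radon measure on ℝ (a regular Borel measure, finite on compact sets) that is invariant under φ(h) for every h ∈ H, and let τ : H → ℝ be a group homomorphism such that for every h ∈ H and every x ∈ ℝ: τ(h) = ν([x, φ(h)(x))) if φ(h)(x) ≥ x, and τ(h) = −ν([φ(h)(x), x)) if φ(h)(x) < x. Then: (1) there exists a group homomorphism κ : G → ℝ (with values in the positive multiplicative reals) such that τ(g h g⁻¹) = κ(g)·τ(h) for every g ∈ G and every h ∈ H ∩ g⁻¹Hg; and (2) the kernel of τ is a commensurated subgroup of G, and φ(h) is the identity of ℝ for every h in the kernel of τ. -/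
open Topology Filter

open MeasureTheory

/-! For `h ∈ H`, `τ h > 0` exactly when `φ h` moves every point to the right: if `τ h = 0`, every
interval between `x` and `φ h x` is `ν`-null, hence so is the set of points moved by `φ h`.
Conjugation by `g` preserves "moving every point to the right", so on the finite-index subgroup
`H ∩ g⁻¹Hg` the homomorphisms `h ↦ τ (g h g⁻¹)` and `τ` have the same positive cone; comparing them
on the elements `h^q h₀^(-p)` shows that they are proportional, with a positive factor `κ g`.

`τ` does not vanish on `H` (else, `H` being countable, `ν`-almost every point would be fixed by
`H`), hence neither on any finite-index subgroup. The kernel `K` of `τ` is mapped into itself by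
conjugations that stay inside `H`, which makes it commensurated. Again `ν`-almost every point is
fixed by `K`, and the closed set of `K`-fixed points is `G`-invariant, since a power of each
`k ∈ K` lies in `w K w⁻¹`; by minimality it is all of `ℝ`. -/

open Set

noncomputable def signedMeasureIco (ν : Measure ℝ) (a b : ℝ) : ℝ :=
  if a ≤ b then (ν (Ico a b)).toReal else -(ν (Ico b a)).toReal

section SignedMeasureIco

variable {ν : Measure ℝ} {a b : ℝ}

lemma signedMeasureIco_nonneg (h : a ≤ b) : 0 ≤ signedMeasureIco ν a b := by
  simp [signedMeasureIco, h]

lemma signedMeasureIco_nonpos (h : b ≤ a) : signedMeasureIco ν a b ≤ 0 := by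
  unfold signedMeasureIco
  split_ifs with hab
  · simp [le_antisymm hab h]
  · simp

lemma measure_Ico_min_max_eq_zero_of_signedMeasureIco_eq_zero [IsLocallyFiniteMeasure ν]
    (h : signedMeasureIco ν a b = 0) : ν (Ico (min a b) (max a b)) = 0 := by
  unfold signedMeasureIco at h
  split_ifs at h with hab
  · simpa [hab, ENNReal.toReal_eq_zero_iff, measure_Ico_lt_top.ne] using h
  · simpa [(not_le.1 hab).le, ENNReal.toReal_eq_zero_iff, measure_Ico_lt_top.ne] using h

variable [IsLocallyFiniteMeasure ν]

lemma measure_setOf_apply_ne_eq_zero {f : ℝ ≃o ℝ} (hf : ∀ x, signedMeasureIco ν x (f x) = 0) :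
    ν {y | f y ≠ y} = 0 := by
  -- a point `y` moved by `f` lies between `z` and `f z` for `z = f⁻¹ r`,
  -- where `r` is a rational between `y` and `f y`
  have hcover : {y | f y ≠ y} ⊆ ⋃ r : ℚ, Ico (min (f.symm r) r) (max (f.symm r) r) := by
    intro y hy
    rcases lt_or_gt_of_ne hy with hlt | hlt
    · obtain ⟨r, hr, hry⟩ := exists_rat_btwn hlt
      refine mem_iUnion.2 ⟨r, Ico_subset_Ico (min_le_right _ _) (le_max_left _ _) ⟨hry.le, ?_⟩⟩
      rwa [OrderIso.lt_symm_apply]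
    · obtain ⟨r, hyr, hr⟩ := exists_rat_btwn hlt
      exact mem_iUnion.2 ⟨r, Ico_subset_Ico (min_le_left _ _) (le_max_right _ _)
        ⟨(f.symm_apply_lt.2 hr).le, hyr⟩⟩
  refine measure_mono_null hcover (measure_iUnion_null fun r => ?_)
  simpa using measure_Ico_min_max_eq_zero_of_signedMeasureIco_eq_zero (hf (f.symm r))

lemma signedMeasureIco_pos_iff {f : ℝ ≃o ℝ} {t : ℝ} (hν : ν ≠ 0)
    (hf : ∀ x, signedMeasureIco ν x (f x) = t) : 0 < t ↔ ∀ x, x < f x := by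
  refine ⟨fun ht x => ?_, fun hup => ?_⟩
  · by_contra! hx
    exact (hf x ▸ ht).not_ge (signedMeasureIco_nonpos hx)
  · refine (hf 0 ▸ signedMeasureIco_nonneg (hup 0).le).lt_of_ne fun ht => hν ?_
    have hmoved : {y | f y ≠ y} = univ := eq_univ_of_forall fun y => (hup y).ne'
    rw [← Measure.measure_univ_eq_zero, ← hmoved]
    exact measure_setOf_apply_ne_eq_zero fun x => (hf x).trans ht.symm

lemma exists_forall_apply_eq_of_signedMeasureIco_eq_zero {ι : Type*} [Countable ι] (hν : ν ≠ 0)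
    (f : ι → ℝ ≃o ℝ) (hf : ∀ i x, signedMeasureIco ν x (f i x) = 0) : ∃ x, ∀ i, f i x = x := by
  have := ae_neBot.2 hν
  exact (ae_all_iff.2 fun i => measure_setOf_apply_ne_eq_zero (hf i)).exists

end SignedMeasureIco

lemma OrderIso.forall_lt_conj_apply_iff {α : Type*} [Preorder α] (f g : α ≃o α) :
    (∀ x, x < (g * f * g⁻¹) x) ↔ ∀ x, x < f x := by
  rw [g.surjective.forall]
  simp [RelIso.mul_apply]

lemma RelIso.coe_pow {α : Type*} {r : α → α → Prop} (f : r ≃r r) (n : ℕ) : ⇑(f ^ n) = f^[n] := by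
  induction n with
  | zero => rfl
  | succ n ih => rw [pow_succ', RelIso.coe_mul, ih, Function.iterate_succ']

section Commensurated

variable {G : Type*} [Group G] {H K : Subgroup G}

lemma mem_map_conj_iff {w x : G} : x ∈ H.map (MulAut.conj w).toMonoidHom ↔ w⁻¹ * x * w ∈ H := by
  rw [Subgroup.mem_map_equiv, MulAut.conj_symm_apply]

lemma Commensurated.of_le (hH : Commensurated H) (hKH : K ≤ H)
    (hK : ∀ w, ∀ k ∈ K, w * k * w⁻¹ ∈ H → w * k * w⁻¹ ∈ K) : Commensurated K := by
  have key : ∀ w : G, (K.map (MulAut.conj w).toMonoidHom).relIndex K ≠ 0 := by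
    intro w
    have hle : H.map (MulAut.conj w).toMonoidHom ⊓ K ≤ K.map (MulAut.conj w).toMonoidHom := by
      intro x hx
      obtain ⟨hxH, hxK⟩ := Subgroup.mem_inf.1 hx
      rw [mem_map_conj_iff] at hxH ⊢
      simpa using hK w⁻¹ x hxK (by simpa using hxH)
    refine ne_zero_of_dvd_ne_zero ?_ (Subgroup.relIndex_dvd_of_le_left K hle)
    rw [Subgroup.inf_relIndex_right]
    exact mt (Subgroup.relIndex_eq_zero_of_le_right hKH) (hH w).2
  refine fun w => ⟨?_, key w⟩
  have hinj : Function.Injective (MulAut.conj w⁻¹).toMonoidHom := (MulAut.conj w⁻¹).injective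
  have hback : (K.map (MulAut.conj w).toMonoidHom).map (MulAut.conj w⁻¹).toMonoidHom = K := by
    ext x
    simp [mul_assoc]
  rw [← Subgroup.relIndex_map_map_of_injective _ _ hinj, hback]
  exact key w⁻¹

end Commensurated

theorem AddMonoidHom.exists_pos_forall_eq_mul_of_pos_iff {A : Type*} [AddGroup A]
    (σ τ : A →+ ℝ) (hpos : ∀ a, 0 < σ a ↔ 0 < τ a) {a₀ : A} (ha₀ : τ a₀ ≠ 0) :
    ∃ c : ℝ, 0 < c ∧ ∀ a, σ a = c * τ a := by
  wlog hτ₀ : 0 < τ a₀ generalizing a₀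
  · exact this (a₀ := -a₀) (by simpa using ha₀) (by simpa using lt_of_le_of_ne (not_lt.1 hτ₀) ha₀)
  have hσ₀ : 0 < σ a₀ := (hpos a₀).2 hτ₀
  -- `r = p / q < χ a / χ a₀` says exactly that `χ (q • a - p • a₀)` is positive
  have key : ∀ χ : A →+ ℝ, 0 < χ a₀ → ∀ a (r : ℚ),
      (r : ℝ) < χ a / χ a₀ ↔ 0 < χ (r.den • a - r.num • a₀) := by
    intro χ hχ a r
    rw [lt_div_iff₀ hχ, Rat.cast_def, div_mul_eq_mul_div, div_lt_iff₀ (by positivity), map_sub,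
      map_nsmul, map_zsmul, nsmul_eq_mul, zsmul_eq_mul, sub_pos, mul_comm (χ a)]
  have hratio : ∀ a, σ a / σ a₀ = τ a / τ a₀ := fun a =>
    eq_of_forall_rat_lt_iff_lt fun r => by rw [key σ hσ₀, key τ hτ₀, hpos]
  refine ⟨σ a₀ / τ a₀, div_pos hσ₀ hτ₀, fun a => ?_⟩
  have := hratio a
  field_simp at this ⊢
  linarith

lemma map_pow_eq_mul_of_map_mul {M : Type*} [Monoid M] {f : M → ℝ}
    (hf : ∀ a b, f (a * b) = f a + f b) (a : M) (n : ℕ) : f (a ^ n) = n * f a := by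
  induction n with
  | zero => simpa using hf 1 1
  | succ n ih => rw [pow_succ, hf, ih]; push_cast; ring

section AdditiveMap

variable {G : Type*} [Group G] {H : Subgroup G} {τ : H → ℝ}

lemma exists_subgroup_forall_mem_iff (hτ : ∀ a b, τ (a * b) = τ a + τ b) :
    ∃ K : Subgroup G, ∀ k, k ∈ K ↔ ∃ hk : k ∈ H, τ ⟨k, hk⟩ = 0 :=
  ⟨(MonoidHom.mk' (fun h => Multiplicative.ofAdd (τ h)) hτ).ker.map H.subtype, fun k => by
    simp; rfl⟩

lemma exists_mem_ne_zero_of_relIndex_ne_zero (hτ : ∀ a b, τ (a * b) = τ a + τ b)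
    {L : Subgroup G} (hL : L.relIndex H ≠ 0) {h₀ : H} (h₀ne : τ h₀ ≠ 0) :
    ∃ h : H, (h : G) ∈ L ∧ τ h ≠ 0 := by
  obtain ⟨n, hn, -, hmem⟩ := Subgroup.exists_pow_mem_of_relIndex_ne_zero hL h₀.2
  refine ⟨h₀ ^ n, (Subgroup.mem_inf.1 hmem).1, ?_⟩
  rw [map_pow_eq_mul_of_map_mul hτ]
  exact mul_ne_zero (by positivity) h₀ne

lemma exists_pos_forall_conj_eq_mul (hτ : ∀ a b, τ (a * b) = τ a + τ b) (hH : Commensurated H)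
    (hpos : ∀ g h (hh : h ∈ H) (hgh : g * h * g⁻¹ ∈ H), 0 < τ ⟨g * h * g⁻¹, hgh⟩ ↔ 0 < τ ⟨h, hh⟩)
    {h₀ : H} (h₀ne : τ h₀ ≠ 0) (g : G) :
    ∃ c, 0 < c ∧
      ∀ h (hh : h ∈ H) (hgh : g * h * g⁻¹ ∈ H), τ ⟨g * h * g⁻¹, hgh⟩ = c * τ ⟨h, hh⟩ := by
  set L := H ⊓ H.map (MulAut.conj g⁻¹).toMonoidHom
  have hmem : ∀ x, x ∈ L ↔ x ∈ H ∧ g * x * g⁻¹ ∈ H := fun x => by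
    simp only [L, Subgroup.mem_inf, mem_map_conj_iff, inv_inv]
  let τL : Additive L →+ ℝ :=
    AddMonoidHom.mk' (fun l => τ ⟨l.toMul, ((hmem _).1 l.toMul.2).1⟩) fun a b => by rw [← hτ]; rfl
  let σL : Additive L →+ ℝ :=
    AddMonoidHom.mk' (fun l => τ ⟨g * l.toMul * g⁻¹, ((hmem _).1 l.toMul.2).2⟩) fun _ _ => by
      rw [← hτ]
      congr 1
      ext
      simp [mul_assoc]
  have hLH : L.relIndex H ≠ 0 := by
    rw [Subgroup.inf_relIndex_left]
    exact (hH g⁻¹).2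
  obtain ⟨l, hlL, hl⟩ := exists_mem_ne_zero_of_relIndex_ne_zero hτ hLH h₀ne
  obtain ⟨c, hc, hσ⟩ := σL.exists_pos_forall_eq_mul_of_pos_iff τL (fun l => hpos _ _ _ _)
    (a₀ := .ofMul ⟨l, hlL⟩) hl
  exact ⟨c, hc, fun h hh hgh => hσ (.ofMul ⟨h, (hmem h).2 ⟨hh, hgh⟩⟩)⟩

lemma map_mul_of_forall_conj_eq_mul (hτ : ∀ a b, τ (a * b) = τ a + τ b) (hH : Commensurated H)
    {h₀ : H} (h₀ne : τ h₀ ≠ 0) {κ : G → ℝ}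
    (hκ : ∀ g h (hh : h ∈ H) (hgh : g * h * g⁻¹ ∈ H), τ ⟨g * h * g⁻¹, hgh⟩ = κ g * τ ⟨h, hh⟩)
    (g g' : G) : κ (g * g') = κ g * κ g' := by
  have hL : (H.map (MulAut.conj g'⁻¹).toMonoidHom ⊓
      H.map (MulAut.conj (g * g')⁻¹).toMonoidHom).relIndex H ≠ 0 :=
    Subgroup.relIndex_inf_ne_zero (hH _).2 (hH _).2
  obtain ⟨h, hhL, hne⟩ := exists_mem_ne_zero_of_relIndex_ne_zero hτ hL h₀ne
  obtain ⟨h₁, h₂⟩ := Subgroup.mem_inf.1 hhL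
  rw [mem_map_conj_iff, inv_inv] at h₁ h₂
  have e : g * g' * h * (g * g')⁻¹ = g * (g' * h * g'⁻¹) * g⁻¹ := by group
  have h₃ : g * (g' * h * g'⁻¹) * g⁻¹ ∈ H := e ▸ h₂
  refine mul_right_cancel₀ hne ?_
  calc κ (g * g') * τ h = τ ⟨g * g' * h * (g * g')⁻¹, h₂⟩ := (hκ _ _ h.2 h₂).symm
    _ = τ ⟨g * (g' * h * g'⁻¹) * g⁻¹, h₃⟩ := by simp only [e]
    _ = κ g * κ g' * τ h := by rw [hκ g _ h₁ h₃, hκ g' _ h.2 h₁, mul_assoc]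

lemma commensurated_of_forall_mem_iff (hH : Commensurated H) {κ : G → ℝ}
    (hκ : ∀ g h (hh : h ∈ H) (hgh : g * h * g⁻¹ ∈ H), τ ⟨g * h * g⁻¹, hgh⟩ = κ g * τ ⟨h, hh⟩)
    {K : Subgroup G} (hK : ∀ k, k ∈ K ↔ ∃ hk : k ∈ H, τ ⟨k, hk⟩ = 0) : Commensurated K :=
  hH.of_le (fun k hk => ((hK k).1 hk).1) fun w k hk hwk => by
    obtain ⟨hkH, hk0⟩ := (hK k).1 hk
    exact (hK _).2 ⟨hwk, by rw [hκ w k hkH hwk, hk0, mul_zero]⟩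

end AdditiveMap

lemma IsMinimalAction.forall_apply_eq_of_commensurated {G : Type*} [Group G]
    {φ : G →* (ℝ ≃o ℝ)} (hφ : IsMinimalAction φ) {K : Subgroup G} (hK : Commensurated K)
    {x : ℝ} (hx : ∀ k ∈ K, φ k x = x) : ∀ k ∈ K, ∀ y, φ k y = y := by
  set X := {y : ℝ | ∀ k ∈ K, φ k y = y}
  have hX : IsClosed X := by
    simp only [X, ofPred_forall]
    exact isClosed_biInter fun k _ => isClosed_eq (φ k).continuous continuous_id
  -- some power `kⁿ` lies in `w K w⁻¹`, hence fixes `φ w x`, and then so does `k`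
  have horbit : ∀ w : G, φ w x ∈ X := by
    intro w k hk
    obtain ⟨n, hn, -, hkn⟩ := Subgroup.exists_pow_mem_of_relIndex_ne_zero (hK w).2 hk
    have hfix := hx _ (mem_map_conj_iff.1 (Subgroup.mem_inf.1 hkn).1)
    have hiter : (φ k)^[n] (φ w x) = id^[n] (φ w x) := by
      rw [Function.iterate_id, ← RelIso.coe_pow, ← map_pow]
      simpa [RelIso.mul_apply] using congrArg (φ w) hfix
    exact (Function.Commute.id_right.iterate_pos_eq_iff_map_eq (φ k).monotone strictMono_id hn).1
      hiter
  intro k hk y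
  have hclosure : closure (range fun w => φ w x) ⊆ X :=
    hX.closure_subset_iff.2 (range_subset_iff.2 horbit)
  exact hclosure ((hφ x).closure_eq ▸ mem_univ y) k hk

theorem stmt5_general (G : Type*) [Group G] [Countable G]
    (φ : G →* (ℝ ≃o ℝ)) (hφ : IsMinimalAction φ)
    (H : Subgroup G) (hH : Commensurated H)
    (hirr : ¬ ∃ x : ℝ, ∀ h ∈ H, φ h x = x)
    (ν : Measure ℝ) (hreg : ν.Regular) (hν : ν ≠ 0)
    (τ : ↥H → ℝ)
    (hτhom : ∀ h h' : ↥H, τ (h * h') = τ h + τ h')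
    (hτν : ∀ (h : ↥H) (x : ℝ),
      (x ≤ φ (h : G) x → τ h = (ν (Set.Ico x (φ (h : G) x))).toReal) ∧
      (φ (h : G) x < x → τ h = -(ν (Set.Ico (φ (h : G) x) x)).toReal)) :
    (∃ κ : G → ℝ, (∀ g : G, 0 < κ g) ∧ (∀ g g' : G, κ (g * g') = κ g * κ g') ∧
      ∀ (g : G) (h : G) (hh : h ∈ H) (hgh : g * h * g⁻¹ ∈ H),
        τ ⟨g * h * g⁻¹, hgh⟩ = κ g * τ ⟨h, hh⟩)
    ∧
    (∃ K : Subgroup G,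
      (∀ k : G, k ∈ K ↔ ∃ hk : k ∈ H, τ ⟨k, hk⟩ = 0) ∧
      Commensurated K ∧
      ∀ k ∈ K, ∀ y : ℝ, φ k y = y) := by
  have : IsLocallyFiniteMeasure ν := inferInstance
  have hτν' : ∀ (h : H) x, signedMeasureIco ν x (φ h x) = τ h := fun h x => by
    unfold signedMeasureIco
    split_ifs with hx
    exacts [((hτν h x).1 hx).symm, ((hτν h x).2 (not_le.1 hx)).symm]
  have hpos : ∀ g h (hh : h ∈ H) (hgh : g * h * g⁻¹ ∈ H),
      0 < τ ⟨g * h * g⁻¹, hgh⟩ ↔ 0 < τ ⟨h, hh⟩ := fun g h hh hgh => by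
    rw [signedMeasureIco_pos_iff hν (hτν' _), signedMeasureIco_pos_iff hν (hτν' _), map_mul,
      map_mul, map_inv, OrderIso.forall_lt_conj_apply_iff]
  have hfix : ∀ S : Set G, (∀ s ∈ S, ∃ hs : s ∈ H, τ ⟨s, hs⟩ = 0) → ∃ x, ∀ s ∈ S, φ s x = x :=
    fun S hS => by
      obtain ⟨x, hx⟩ := exists_forall_apply_eq_of_signedMeasureIco_eq_zero hν (fun s : S => φ s)
        fun s x => by
          obtain ⟨hs, hs0⟩ := hS s s.2
          exact (hτν' ⟨s, hs⟩ x).trans hs0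
      exact ⟨x, fun s hs => hx ⟨s, hs⟩⟩
  obtain ⟨h₀, h₀ne⟩ : ∃ h₀ : H, τ h₀ ≠ 0 := by
    by_contra! hτ0
    exact hirr (hfix H fun h hh => ⟨hh, hτ0 _⟩)
  choose κ hκpos hκ using exists_pos_forall_conj_eq_mul hτhom hH hpos h₀ne
  obtain ⟨K, hK⟩ := exists_subgroup_forall_mem_iff hτhom
  have hKcomm := commensurated_of_forall_mem_iff hH hκ hK
  obtain ⟨x, hx⟩ := hfix K fun k hk => (hK k).1 hk
  exact ⟨⟨κ, hκpos, map_mul_of_forall_conj_eq_mul hτhom hH h₀ne hκ, hκ⟩, K, hK, hKcomm,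
    hφ.forall_apply_eq_of_commensurated hKcomm hx⟩

theorem stmt5 (G : Type*) [Group G] [Countable G]
    (φ : G →* (ℝ ≃o ℝ)) (hφ : IsMinimalAction φ)
    (H : Subgroup G) (hH : Commensurated H)
    (hirr : ¬ ∃ x : ℝ, ∀ h ∈ H, φ h x = x)
    (ν : Measure ℝ) (hreg : ν.Regular) (hν : ν ≠ 0)
    (hinv : ∀ h ∈ H, Measure.map (⇑(φ h)) ν = ν)
    (τ : ↥H → ℝ)
    (hτhom : ∀ h h' : ↥H, τ (h * h') = τ h + τ h')
    (hτν : ∀ (h : ↥H) (x : ℝ),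
      (x ≤ φ (h : G) x → τ h = (ν (Set.Ico x (φ (h : G) x))).toReal) ∧
      (φ (h : G) x < x → τ h = -(ν (Set.Ico (φ (h : G) x) x)).toReal)) :
    (∃ κ : G → ℝ, (∀ g : G, 0 < κ g) ∧ (∀ g g' : G, κ (g * g') = κ g * κ g') ∧
      ∀ (g : G) (h : G) (hh : h ∈ H) (hgh : g * h * g⁻¹ ∈ H),
        τ ⟨g * h * g⁻¹, hgh⟩ = κ g * τ ⟨h, hh⟩)
    ∧
    (∃ K : Subgroup G,
      (∀ k : G, k ∈ K ↔ ∃ hk : k ∈ H, τ ⟨k, hk⟩ = 0) ∧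
      Commensurated K ∧
      ∀ k ∈ K, ∀ y : ℝ, φ k y = y) :=
  stmt5_general G φ hφ H hH hirr ν hreg hν τ hτhom hτν
end

section
/- Let G be a countable group, φ a minimal action of G on the line, and H a commensurated subgroup of G such that the restriction of φ to H has no global fixed point. Let ν be a nonzero Radon measure on ℝ invariant under φ(h) for every h ∈ H, and let τ : H → ℝ be a group homomorphism such that for every h ∈ H and every x ∈ ℝ: τ(h) = ν([x, φ(h)(x))) if φ(h)(x) ≥ x, and τ(h) = −ν([φ(h)(x), x)) if φ(h)(x) < x. If the image φ(H) is not a cyclic group, then there exists f ∈ Homeo₀(ℝ) such that for every g ∈ G the map f ∘ φ(g) ∘ f⁻¹ is an affine map x ↦ a x + b with a > 0; moreover, for every subgroup L of G such that L ∩ H has finite index in both L and H, and every h ∈ L, the map f ∘ φ(h) ∘ f⁻¹ is a translation x ↦ x + b. -/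
open Topology Filter

open MeasureTheory

/-!
Let `F` be the distribution function of `ν`, so that `F y - F x = ν [x, y)`. The hypothesis on `τ`
says exactly that `F ∘ φ h = F + τ h` for `h ∈ H`. An element with `τ h = 0` fixes the points of
increase of `F`; since `H` is commensurated, it then fixes the `G`-orbit of such a point, which is
dense, so the kernel of `τ` acts trivially and, `φ(H)` not being cyclic, `τ(H)` is dense in `ℝ`.

For `g ∈ G`, the function `F ∘ φ g` is translated by the finite-index subgroup `H ∩ g⁻¹Hg`
through a homomorphism with the same sign as `τ`, hence proportional to `τ`; by density of the
translation lengths, `F ∘ φ g = c F + b` with `c > 0`. So the points of increase of `F` form a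
`G`-invariant set, dense by minimality, and `F` is strictly increasing; its range contains a
translate of `τ(H)`, so `F` is also continuous and onto. This homeomorphism `F` conjugates `φ`
into the affine group. If `h` lies in a subgroup commensurable with `H`, some power `h ^ n` lies in
`H` and acts by a translation, so the slope `a` of `h` satisfies `a ^ n = 1`, i.e. `a = 1`.
-/

open Set Function

namespace LineAction

section AdditiveFunction

variable {A : Type*} [Group A] {α β : A → ℝ}

def addHom (α : A → ℝ) (hα : ∀ a b, α (a * b) = α a + α b) : Additive A →+ ℝ :=
  AddMonoidHom.mk' (fun a => α a.toMul) fun _ _ => hα _ _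

theorem coe_range_addHom (hα : ∀ a b, α (a * b) = α a + α b) :
    ((addHom α hα).range : Set ℝ) = range α :=
  rfl

theorem map_zpow_of_add (hα : ∀ a b, α (a * b) = α a + α b) (a : A) (n : ℤ) :
    α (a ^ n) = n * α a := by
  have h := (addHom α hα).map_zsmul n (Additive.ofMul a)
  rwa [zsmul_eq_mul] at h

theorem map_pow_of_add (hα : ∀ a b, α (a * b) = α a + α b) (a : A) (n : ℕ) :
    α (a ^ n) = n * α a := by
  simpa using map_zpow_of_add hα a n

theorem map_inv_of_add (hα : ∀ a b, α (a * b) = α a + α b) (a : A) : α a⁻¹ = -α a := by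
  simpa using map_zpow_of_add hα a (-1)

theorem map_one_of_add (hα : ∀ a b, α (a * b) = α a + α b) : α 1 = 0 := by
  simpa using map_pow_of_add hα 1 0

theorem nonpos_of_forall_nat_mul_le {d q : ℝ} (h : ∀ n : ℕ, n * d ≤ q) : d ≤ 0 := by
  by_contra! hd
  obtain ⟨n, hn⟩ := exists_nat_gt (q / d)
  have := h n
  rw [div_lt_iff₀ hd] at hn
  linarith

theorem exists_nonneg_eq_mul_of_nonpos_imp (hα : ∀ a b, α (a * b) = α a + α b)
    (hβ : ∀ a b, β (a * b) = β a + β b) (h : ∀ a, α a ≤ 0 → β a ≤ 0) :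
    ∃ c, 0 ≤ c ∧ ∀ a, β a = c * α a := by
  have hmono : ∀ a b, α a ≤ α b → β a ≤ β b := by
    intro a b hab
    have := h (a * b⁻¹) (by rw [hα, map_inv_of_add hα]; linarith)
    rw [hβ, map_inv_of_add hβ] at this
    linarith
  by_cases h0 : ∀ a, α a = 0
  · refine ⟨0, le_rfl, fun a => ?_⟩
    have h1 := hmono a 1 (by rw [h0, h0])
    have h2 := hmono 1 a (by rw [h0, h0])
    rw [map_one_of_add hβ] at h1 h2
    linarith
  push Not at h0
  obtain ⟨a₀, ha₀⟩ : ∃ a₀, 0 < α a₀ := by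
    obtain ⟨a, ha⟩ := h0
    rcases ha.lt_or_gt with ha | ha
    · exact ⟨a⁻¹, by rw [map_inv_of_add hα]; linarith⟩
    · exact ⟨a, ha⟩
  have hβ₀ : 0 ≤ β a₀ := by
    simpa [map_one_of_add hβ] using hmono 1 a₀ (by rw [map_one_of_add hα]; exact ha₀.le)
  refine ⟨β a₀ / α a₀, div_nonneg hβ₀ ha₀.le, fun a => ?_⟩
  set r := α a / α a₀
  have hr : α a = r * α a₀ := (div_mul_cancel₀ _ ha₀.ne').symm
  -- compare `a ^ n` with `a₀ ^ m` for `m` the ceiling, resp. floor, of `n * r`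
  have hle : ∀ n : ℕ, n * (β a - r * β a₀) ≤ β a₀ := by
    intro n
    have hm := Int.le_ceil (n * r)
    have := hmono (a ^ n) (a₀ ^ ⌈n * r⌉) (by
      rw [map_pow_of_add hα, map_zpow_of_add hα, hr, ← mul_assoc]
      exact mul_le_mul_of_nonneg_right hm ha₀.le)
    rw [map_pow_of_add hβ, map_zpow_of_add hβ] at this
    nlinarith [Int.ceil_lt_add_one (n * r)]
  have hge : ∀ n : ℕ, n * (r * β a₀ - β a) ≤ β a₀ := by
    intro n
    have hm := Int.floor_le (n * r)
    have := hmono (a₀ ^ ⌊n * r⌋) (a ^ n) (by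
      rw [map_pow_of_add hα, map_zpow_of_add hα, hr, ← mul_assoc]
      exact mul_le_mul_of_nonneg_right hm ha₀.le)
    rw [map_pow_of_add hβ, map_zpow_of_add hβ] at this
    nlinarith [Int.lt_floor_add_one (n * r)]
  have := nonpos_of_forall_nat_mul_le hle
  have := nonpos_of_forall_nat_mul_le hge
  rw [show β a = r * β a₀ by linarith, hr]
  field_simp

end AdditiveFunction

noncomputable def cdf (ν : Measure ℝ) (x : ℝ) : ℝ :=
  if 0 ≤ x then (ν (Ico 0 x)).toReal else -(ν (Ico x 0)).toReal

section Cdf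

variable (ν : Measure ℝ) [IsLocallyFiniteMeasure ν]

theorem cdf_sub_cdf {x y : ℝ} (hxy : x ≤ y) : cdf ν y - cdf ν x = (ν (Ico x y)).toReal := by
  have split : ∀ {a b c : ℝ}, a ≤ b → b ≤ c →
      (ν (Ico a c)).toReal = (ν (Ico a b)).toReal + (ν (Ico b c)).toReal := fun hab hbc => by
    rw [← Ico_union_Ico_eq_Ico hab hbc, measure_union Ico_disjoint_Ico_same measurableSet_Ico,
      ENNReal.toReal_add measure_Ico_lt_top.ne measure_Ico_lt_top.ne]
  unfold cdf
  split_ifs with hy hx hx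
  · linarith [split hx hxy]
  · linarith [split (not_le.1 hx).le hy]
  · exact absurd (hx.trans hxy) hy
  · linarith [split hxy (not_le.1 hy).le]

theorem monotone_cdf : Monotone (cdf ν) := fun x y hxy => by
  linarith [cdf_sub_cdf ν hxy, ENNReal.toReal_nonneg (a := ν (Ico x y))]

theorem cdf_eq_add {x y t : ℝ} (h₁ : x ≤ y → t = (ν (Ico x y)).toReal)
    (h₂ : y < x → t = -(ν (Ico y x)).toReal) : cdf ν y = cdf ν x + t := by
  rcases le_or_gt x y with hxy | hyx
  · linarith [cdf_sub_cdf ν hxy, h₁ hxy]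
  · linarith [cdf_sub_cdf ν hyx.le, h₂ hyx]

theorem exists_cdf_lt_cdf (hν : ν ≠ 0) : ∃ a b, cdf ν a < cdf ν b := by
  obtain ⟨a, b, hab, hne⟩ : ∃ a b, a < b ∧ ν (Ico a b) ≠ 0 := by
    by_contra! h
    exact hν (Measure.ext_of_Ico ν 0 fun a b hab => h a b hab)
  refine ⟨a, b, ?_⟩
  have := ENNReal.toReal_pos hne measure_Ico_lt_top.ne
  linarith [cdf_sub_cdf ν hab.le]

end Cdf

def IsPointOfIncrease (F : ℝ → ℝ) (x : ℝ) : Prop :=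
  ∀ ⦃u v⦄, u < x → x < v → F u < F v

section PointOfIncrease

variable {F : ℝ → ℝ}

theorem _root_.Monotone.exists_isPointOfIncrease (hF : Monotone F) {a b : ℝ} (hab : F a < F b) :
    ∃ x, IsPointOfIncrease F x := by
  set S := {x | F a < F x}
  have hbdd : BddBelow S := ⟨a, fun x hx => (hF.reflect_lt hx).le⟩
  refine ⟨sInf S, fun u v hu hv => ?_⟩
  have hua : F u ≤ F a := not_lt.1 fun h => (csInf_le hbdd h).not_gt hu
  obtain ⟨x, hxS, hxv⟩ := exists_lt_of_csInf_lt ⟨b, hab⟩ hv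
  exact hua.trans_lt (hxS.trans_le (hF hxv.le))

theorem IsPointOfIncrease.apply_eq_self {x : ℝ} (hx : IsPointOfIncrease F x) {e : ℝ ≃o ℝ}
    (he : ∀ y, F (e y) = F y) : e x = x := by
  have he' : ∀ y, F (e.symm y) = F y := fun y => by
    rw [← he (e.symm y), e.apply_symm_apply]
  rcases lt_trichotomy (e x) x with hlt | heq | hgt
  · have := hx hlt (e.lt_symm_apply.2 hlt)
    rw [he, he'] at this
    exact absurd this (lt_irrefl _)
  · exact heq
  · have := hx (e.symm_apply_lt.2 hgt) hgt
    rw [he, he'] at this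
    exact absurd this (lt_irrefl _)

theorem IsPointOfIncrease.map {x : ℝ} (hx : IsPointOfIncrease F x) {e : ℝ ≃o ℝ} {c b : ℝ}
    (hc : 0 < c) (he : ∀ y, F (e y) = c * F y + b) : IsPointOfIncrease F (e x) := by
  intro u v hu hv
  have := hx (e.symm_apply_lt.2 hu) (e.lt_symm_apply.2 hv)
  rw [← e.apply_symm_apply u, ← e.apply_symm_apply v, he, he]
  gcongr

theorem strictMono_of_dense_isPointOfIncrease {S : Set ℝ} (hS : Dense S)
    (hF : ∀ x ∈ S, IsPointOfIncrease F x) : StrictMono F := fun x y hxy => by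
  obtain ⟨z, hzS, hxz, hzy⟩ := hS.exists_between hxy
  exact hF z hzS hxz hzy

end PointOfIncrease

theorem _root_.Monotone.surjective_of_denseRange {F : ℝ → ℝ} (hF : Monotone F)
    (hd : DenseRange F) : Surjective F := by
  have unbounded : ∀ b, ∃ x, b ≤ F x := fun b => by
    obtain ⟨_, ⟨x, rfl⟩, hx, -⟩ := hd.exists_between (lt_add_one b)
    exact ⟨x, hx.le⟩
  have unbounded' : ∀ b, ∃ x, F x ≤ b := fun b => by
    obtain ⟨_, ⟨x, rfl⟩, -, hx⟩ := hd.exists_between (sub_one_lt b)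
    exact ⟨x, hx.le⟩
  exact (hF.continuous_of_denseRange hd).surjective
    (tendsto_atTop_atTop_of_monotone hF unbounded) (tendsto_atBot_atBot_of_monotone hF unbounded')

theorem eq_mul_of_dense {D : Set ℝ} (hD : Dense D) {c s m : ℝ}
    (hup : ∀ t ∈ D, s < t → m ≤ c * t) (hlow : ∀ t ∈ D, t < s → c * t ≤ m) : m = c * s := by
  have hs_up : s ∈ closure (Ioi s ∩ D) :=
    closure_minimal (hD.open_subset_closure_inter isOpen_Ioi) isClosed_closure
      (by rw [closure_Ioi]; exact self_mem_Ici)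
  have hs_low : s ∈ closure (Iio s ∩ D) :=
    closure_minimal (hD.open_subset_closure_inter isOpen_Iio) isClosed_closure
      (by rw [closure_Iio]; exact self_mem_Iic)
  apply le_antisymm
  · exact (isClosed_le continuous_const (continuous_const_mul c)).closure_subset_iff.2
      (fun t ht => hup t ht.2 ht.1) hs_up
  · exact (isClosed_le (continuous_const_mul c) continuous_const).closure_subset_iff.2
      (fun t ht => hlow t ht.2 ht.1) hs_low

section Translations

variable {A : Type*} [Group A] (ψ : A →* ℝ ≃o ℝ) {F : ℝ → ℝ} {τ : A → ℝ}

theorem map_mul_apply (a b : A) (x : ℝ) : ψ (a * b) x = ψ a (ψ b x) := by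
  rw [map_mul, RelIso.mul_apply]

theorem map_mul_of_apply_eq_add (hF : ∀ a x, F (ψ a x) = F x + τ a) (a b : A) :
    τ (a * b) = τ a + τ b := by
  have := hF (a * b) 0
  rw [map_mul_apply, hF, hF] at this
  linarith

theorem exists_eq_mul_add_of_translations (hF : Monotone F) {M : ℝ → ℝ} (hM : Monotone M)
    {δ : A → ℝ} (hFτ : ∀ a x, F (ψ a x) = F x + τ a) (hMδ : ∀ a x, M (ψ a x) = M x + δ a)
    (hdense : Dense (range τ)) (hker : ∀ a, τ a = 0 → ψ a = 1) :
    ∃ c, 0 ≤ c ∧ ∃ b, ∀ x, M x = c * F x + b := by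
  have hsign : ∀ a, τ a ≤ 0 → δ a ≤ 0 := by
    intro a ha
    rcases ha.lt_or_eq with ha | ha
    · have : ψ a 0 < 0 := hF.reflect_lt (by linarith [hFτ a 0])
      linarith [hM this.le, hMδ a 0]
    · have := hMδ a 0
      rw [hker a ha, RelIso.coe_one, id] at this
      linarith
  obtain ⟨c, hc, hδ⟩ := exists_nonneg_eq_mul_of_nonpos_imp (map_mul_of_apply_eq_add ψ hFτ)
    (map_mul_of_apply_eq_add ψ hMδ) hsign
  -- compare `y` with `ψ a x` for `τ a` slightly above or below `F y - F x`
  have key : ∀ x y, M y - M x = c * (F y - F x) := fun x y => by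
    refine eq_mul_of_dense hdense ?_ ?_
    · rintro _ ⟨a, rfl⟩ ht
      have : y < ψ a x := hF.reflect_lt (by linarith [hFτ a x])
      linarith [hM this.le, hMδ a x, hδ a]
    · rintro _ ⟨a, rfl⟩ ht
      have : ψ a x < y := hF.reflect_lt (by linarith [hFτ a x])
      linarith [hM this.le, hMδ a x, hδ a]
  exact ⟨c, hc, M 0 - c * F 0, fun x => by linarith [key 0 x]⟩

end Translations

theorem dense_range_restrict_of_index_ne_zero {A : Type*} [Group A] {τ : A → ℝ}
    (hτ : ∀ a b, τ (a * b) = τ a + τ b) (hd : Dense (range τ)) {B : Subgroup A}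
    (hB : B.index ≠ 0) : Dense (range fun b : B => τ b) := by
  have hτB : ∀ a b : B, τ ↑(a * b) = τ a + τ b := fun a b => hτ a b
  rw [← coe_range_addHom hτB]
  refine AddSubgroup.dense_of_not_isolated_zero _ fun ε hε => ?_
  have hB' : (0 : ℝ) < B.index := Nat.cast_pos.2 (Nat.pos_of_ne_zero hB)
  obtain ⟨_, ⟨a, rfl⟩, ha₀, haε⟩ := hd.exists_between (div_pos hε hB')
  obtain ⟨n, hn, hnB, hmem⟩ := Subgroup.exists_pow_mem_of_index_ne_zero hB a
  have hn' : (n : ℝ) ≤ B.index := Nat.cast_le.2 hnB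
  refine ⟨τ (a ^ n), ⟨Additive.ofMul ⟨a ^ n, hmem⟩, rfl⟩, ?_, ?_⟩ <;>
    rw [map_pow_of_add hτ]
  · exact mul_pos (Nat.cast_pos.2 hn) ha₀
  · calc (n : ℝ) * τ a ≤ B.index * τ a := mul_le_mul_of_nonneg_right hn' ha₀.le
      _ < B.index * (ε / B.index) := mul_lt_mul_of_pos_left haε hB'
      _ = ε := mul_div_cancel₀ ε hB'.ne'

section Commensurated

variable {G : Type*} [Group G] {φ : G →* ℝ ≃o ℝ} {H : Subgroup G} {F : ℝ → ℝ} {τ : H → ℝ}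

theorem eq_one_of_translation_eq_zero (hφ : IsMinimalAction φ) (hH : Commensurated H)
    (hF : ∀ (h : H) x, F (φ h x) = F x + τ h) {s₀ : ℝ} (hs₀ : IsPointOfIncrease F s₀)
    {h : H} (hτ : τ h = 0) : φ h = 1 := by
  have hadd := map_mul_of_apply_eq_add (φ.comp H.subtype) hF
  have hfix : ∀ k : H, τ k = 0 → φ k s₀ = s₀ := fun k hk =>
    hs₀.apply_eq_self fun y => by rw [hF, hk, add_zero]
  have horbit : ∀ g : G, φ h (φ g s₀) = φ g s₀ := by
    intro g
    obtain ⟨n, hn, -, hpow, -⟩ := Subgroup.exists_pow_mem_of_relIndex_ne_zero (hH g).2 h.2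
    obtain ⟨k, hk, hkh⟩ := Subgroup.mem_map.1 hpow
    have hgk : g * k = (h : G) ^ n * g := by
      rw [← hkh]
      simp
    have hhn : φ ((h : G) ^ n) s₀ = s₀ := hfix (h ^ n) (by rw [map_pow_of_add hadd, hτ, mul_zero])
    -- `k` fixes `g⁻¹ s₀`, hence has zero translation length, hence fixes `s₀`
    have hk₀ : τ ⟨k, hk⟩ = 0 := by
      have hfixk : φ k (φ g⁻¹ s₀) = φ g⁻¹ s₀ := by
        rw [← map_mul_apply, show k * g⁻¹ = g⁻¹ * (h : G) ^ n by
          rw [mul_inv_eq_iff_eq_mul, mul_assoc, ← hgk, inv_mul_cancel_left],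
          map_mul_apply, hhn]
      linarith [hF ⟨k, hk⟩ (φ g⁻¹ s₀), congrArg F hfixk]
    have hgs₀ : φ ((h : G) ^ n) (φ g s₀) = φ g s₀ := by
      rw [← map_mul_apply, ← hgk, map_mul_apply, hfix ⟨k, hk⟩ hk₀]
    have hiter : ⇑(φ h ^ n) = (⇑(φ h))^[n] := hom_coe_pow DFunLike.coe rfl (fun _ _ => rfl) _ n
    rw [map_pow, hiter] at hgs₀
    exact (Commute.id_right.iterate_pos_eq_iff_map_eq (φ h).monotone strictMono_id hn).1
      (by simpa using hgs₀)
  refine DFunLike.coe_injective (Continuous.ext_on (hφ s₀) (φ h).continuous continuous_id ?_)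
  rintro _ ⟨g, rfl⟩
  exact horbit g

theorem dense_range_translation (hφ : IsMinimalAction φ) (hH : Commensurated H)
    (hF : ∀ (h : H) x, F (φ h x) = F x + τ h) {s₀ : ℝ} (hs₀ : IsPointOfIncrease F s₀)
    (hnoncyc : ¬ ∃ c : ℝ ≃o ℝ, ∀ h ∈ H, ∃ n : ℤ, φ h = c ^ n) : Dense (range τ) := by
  have hadd := map_mul_of_apply_eq_add (φ.comp H.subtype) hF
  rw [← coe_range_addHom hadd]
  refine (AddSubgroup.dense_or_cyclic _).resolve_right ?_
  rintro ⟨_, hcyc⟩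
  have hmem : ∀ x, x ∈ (addHom τ hadd).range ↔ x ∈ AddSubgroup.closure {_} := fun x => by
    rw [hcyc]
  obtain ⟨h₀, rfl⟩ := (hmem _).2 (AddSubgroup.subset_closure rfl)
  refine hnoncyc ⟨φ h₀.toMul, fun h hh => ?_⟩
  obtain ⟨n, hn⟩ := AddSubgroup.mem_closure_singleton.1
    ((hmem _).1 ⟨Additive.ofMul ⟨h, hh⟩, rfl⟩)
  have hτn : τ (⟨h, hh⟩ * (h₀.toMul ^ n)⁻¹) = 0 := by
    have hn' : n • τ h₀.toMul = τ ⟨h, hh⟩ := hn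
    rw [hadd, map_inv_of_add hadd, map_zpow_of_add hadd, ← zsmul_eq_mul, hn', add_neg_cancel]
  have hker := eq_one_of_translation_eq_zero hφ hH hF hs₀ hτn
  rw [Subgroup.coe_mul, Subgroup.coe_inv, Subgroup.coe_zpow, map_mul, map_inv, mul_inv_eq_one,
    map_zpow] at hker
  exact ⟨n, hker⟩

theorem exists_apply_eq_mul_add (hφ : IsMinimalAction φ) (hH : Commensurated H)
    (hFmono : Monotone F) (hF : ∀ (h : H) x, F (φ h x) = F x + τ h) {s₀ : ℝ}
    (hs₀ : IsPointOfIncrease F s₀) (hdense : Dense (range τ)) (g : G) :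
    ∃ c, 0 < c ∧ ∃ b, ∀ x, F (φ g x) = c * F x + b := by
  have hadd := map_mul_of_apply_eq_add (φ.comp H.subtype) hF
  set B := (H.map (MulAut.conj g⁻¹).toMonoidHom).subgroupOf H
  have hconj : ∀ k : B, g * k * g⁻¹ ∈ H := fun k => by
    obtain ⟨k', hk', hkk'⟩ := Subgroup.mem_map.1 (Subgroup.mem_subgroupOf.1 k.2)
    rw [← hkk']
    simpa [mul_assoc] using hk'
  -- `B = H ∩ g⁻¹Hg` has finite index in `H`, and `k ∈ B` translates `F ∘ φ g` by `τ (g k g⁻¹)`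
  obtain ⟨c, hc, b, hb⟩ := exists_eq_mul_add_of_translations
    ((φ.comp H.subtype).comp B.subtype) hFmono (hFmono.comp (φ g).monotone)
    (τ := fun k => τ k) (δ := fun k => τ ⟨g * k * g⁻¹, hconj k⟩) (fun k x => hF k x)
    (fun k x => by
      have h := hF ⟨_, hconj k⟩ (φ g x)
      rwa [← map_mul_apply, inv_mul_cancel_right, map_mul_apply] at h)
    (dense_range_restrict_of_index_ne_zero hadd hdense (hH g⁻¹).2)
    (fun k hk => eq_one_of_translation_eq_zero hφ hH hF hs₀ hk)
  refine ⟨c, hc.lt_of_ne ?_, b, hb⟩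
  rintro rfl
  have hconst : ∀ y, F y = b := fun y => by simpa using hb ((φ g).symm y)
  have := hs₀ (sub_one_lt s₀) (lt_add_one s₀)
  rw [hconst, hconst] at this
  exact lt_irrefl b this

end Commensurated

theorem eq_one_of_pow_apply_eq_add {F : ℝ → ℝ} {e : ℝ ≃o ℝ} {c b t : ℝ} (hc : 0 ≤ c)
    (he : ∀ x, F (e x) = c * F x + b) {n : ℕ} (hn : n ≠ 0)
    (hen : ∀ x, F ((e ^ n) x) = F x + t) {x y : ℝ} (hxy : F x ≠ F y) : c = 1 := by
  have hpow : ∀ m : ℕ, ∃ b', ∀ x, F ((e ^ m) x) = c ^ m * F x + b' := by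
    intro m
    induction m with
    | zero => exact ⟨0, fun x => by simp⟩
    | succ m ih =>
      obtain ⟨b', hb'⟩ := ih
      exact ⟨c * b' + b, fun x => by rw [pow_succ', RelIso.mul_apply, he, hb']; ring⟩
  obtain ⟨b', hb'⟩ := hpow n
  have hcn : (c ^ n - 1) * (F x - F y) = 0 := by
    linear_combination (hb' x).symm.trans (hen x) - (hb' y).symm.trans (hen y)
  exact (pow_eq_one_iff_of_nonneg hc hn).1
    (sub_eq_zero.1 ((mul_eq_zero.1 hcn).resolve_right (sub_ne_zero.2 hxy)))

end LineAction

open LineAction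

theorem stmt6_general (G : Type*) [Group G]
    (φ : G →* (ℝ ≃o ℝ)) (hφ : IsMinimalAction φ)
    (H : Subgroup G) (hH : Commensurated H)
    (ν : Measure ℝ) (hreg : ν.Regular) (hν : ν ≠ 0)
    (τ : ↥H → ℝ)
    (hτν : ∀ (h : ↥H) (x : ℝ),
      (x ≤ φ (h : G) x → τ h = (ν (Set.Ico x (φ (h : G) x))).toReal) ∧
      (φ (h : G) x < x → τ h = -(ν (Set.Ico (φ (h : G) x) x)).toReal))
    (hnoncyc : ¬ ∃ c : ℝ ≃o ℝ, ∀ h ∈ H, ∃ n : ℤ, φ h = c ^ n) :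
    ∃ f : ℝ ≃o ℝ,
      (∀ g : G, ∃ a b : ℝ, 0 < a ∧ ∀ x : ℝ, f (φ g (f.symm x)) = a * x + b) ∧
      (∀ L : Subgroup G, Subgroup.Commensurable L H →
        ∀ h ∈ L, ∃ b : ℝ, ∀ x : ℝ, f (φ h (f.symm x)) = x + b) := by
  have hF : ∀ (h : H) x, cdf ν (φ h x) = cdf ν x + τ h := fun h x =>
    cdf_eq_add ν (hτν h x).1 (hτν h x).2
  obtain ⟨x₀, x₁, hx⟩ := exists_cdf_lt_cdf ν hν
  obtain ⟨s₀, hs₀⟩ := (monotone_cdf ν).exists_isPointOfIncrease hx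
  have hdense := dense_range_translation hφ hH hF hs₀ hnoncyc
  choose c hc b hb using exists_apply_eq_mul_add hφ hH (monotone_cdf ν) hF hs₀ hdense
  have hstrict : StrictMono (cdf ν) := strictMono_of_dense_isPointOfIncrease (hφ s₀) <| by
    rintro _ ⟨g, rfl⟩
    exact hs₀.map (hc g) (hb g)
  -- the range of `cdf ν` contains the dense set `cdf ν s₀ + τ(H)`
  have hrange : DenseRange (cdf ν) := by
    refine Dense.mono ?_ ((Equiv.addLeft (cdf ν s₀)).surjective.denseRange.comp hdense
      (continuous_const_add (cdf ν s₀)))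
    rintro _ ⟨h, rfl⟩
    exact ⟨φ h s₀, hF h s₀⟩
  set f := hstrict.orderIsoOfSurjective (cdf ν) ((monotone_cdf ν).surjective_of_denseRange hrange)
  have hconj : ∀ g x, f (φ g (f.symm x)) = c g * x + b g := fun g x => by
    have h := hb g (f.symm x)
    rwa [show cdf ν (f.symm x) = x from f.apply_symm_apply x] at h
  refine ⟨f, fun g => ⟨c g, b g, hc g, hconj g⟩, fun L hL h hhL => ⟨b h, fun x => ?_⟩⟩
  obtain ⟨n, hn, -, hpow, -⟩ := Subgroup.exists_pow_mem_of_relIndex_ne_zero hL.2 hhL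
  have hch : c h = 1 := eq_one_of_pow_apply_eq_add (hc h).le (hb h) hn.ne'
    (fun x => by rw [← map_pow]; exact hF ⟨_, hpow⟩ x) hx.ne
  rw [hconj, hch, one_mul]

theorem stmt6 (G : Type*) [Group G] [Countable G]
    (φ : G →* (ℝ ≃o ℝ)) (hφ : IsMinimalAction φ)
    (H : Subgroup G) (hH : Commensurated H)
    (hirr : ¬ ∃ x : ℝ, ∀ h ∈ H, φ h x = x)
    (ν : Measure ℝ) (hreg : ν.Regular) (hν : ν ≠ 0)
    (hinv : ∀ h ∈ H, Measure.map (⇑(φ h)) ν = ν)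
    (τ : ↥H → ℝ)
    (hτhom : ∀ h h' : ↥H, τ (h * h') = τ h + τ h')
    (hτν : ∀ (h : ↥H) (x : ℝ),
      (x ≤ φ (h : G) x → τ h = (ν (Set.Ico x (φ (h : G) x))).toReal) ∧
      (φ (h : G) x < x → τ h = -(ν (Set.Ico (φ (h : G) x) x)).toReal))
    (hnoncyc : ¬ ∃ c : ℝ ≃o ℝ, ∀ h ∈ H, ∃ n : ℤ, φ h = c ^ n) :
    ∃ f : ℝ ≃o ℝ,
      (∀ g : G, ∃ a b : ℝ, 0 < a ∧ ∀ x : ℝ, f (φ g (f.symm x)) = a * x + b) ∧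
      (∀ L : Subgroup G, Subgroup.Commensurable L H →
        ∀ h ∈ L, ∃ b : ℝ, ∀ x : ℝ, f (φ h (f.symm x)) = x + b) :=
  stmt6_general G φ hφ H hH ν hreg hν τ hτν hnoncyc
end

section
/- Let I = (−1/4, 1/4) ⊆ ℝ. Then there exists a sequence (fₙ)_{n ≥ 1} of dyadic PL homeomorphisms of I such that: (1) fₙ(x) > x for every x ∈ I and every n; (2) for every n ≥ m, fₙ(x) = fₘ(x) for every x ∈ I with |x| ≥ 4^{−(m+1)}; and (3) fₙ(0) → 0 as n → ∞. In particular, the sequence (fₙ) converges pointwise to an increasing bijection f_∞ of I with f_∞(0) = 0 and f_∞(x) > x for every x ∈ I \ {0}. -/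
open Topology Filter

/-- The interval `I = (-1/4, 1/4)`. -/
noncomputable def I16 : Set ℝ := Set.Ioo (-(1/4) : ℝ) (1/4)

/-- A dyadic rational number. -/
def IsDyadic (x : ℝ) : Prop := ∃ k : ℤ, ∃ n : ℕ, x = (k : ℝ) / 2 ^ n

/-- A dyadic PL homeomorphism of `I = (-1/4, 1/4)`: an increasing bijection of `I`
which, away from a finite set of dyadic breakpoints, is locally of the form
`x ↦ 2^k x + c` with `k ∈ ℤ` and `c` dyadic. -/
def IsDyadicPL (f : ℝ → ℝ) : Prop :=
  StrictMonoOn f I16 ∧ f '' I16 = I16 ∧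
  ∃ F : Set ℝ, F.Finite ∧ (∀ x ∈ F, IsDyadic x) ∧
    ∀ x ∈ I16, x ∉ F →
      ∃ U : Set ℝ, IsOpen U ∧ x ∈ U ∧ ∃ k : ℤ, ∃ c : ℝ, IsDyadic c ∧
        ∀ y ∈ U ∩ I16, f y = (2 : ℝ) ^ k * y + c

noncomputable def Fa (a : ℝ) (x : ℝ) : ℝ :=
  if x ≤ -(3/16) then 2*x + 1/4
  else if x ≤ -(1/8) then x + 1/16
  else if x ≤ -(a/2) then x/2
  else if x ≤ a/4 then x + a/4
  else if x ≤ 1/16 then 2*x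
  else if x ≤ 1/8 then x + 1/16
  else x/2 + 1/8

set_option maxHeartbeats 1600000 in
lemma Fa_strictMono {a : ℝ} (ha : 0 ≤ a) (ha' : a ≤ 1/4) : StrictMono (Fa a) := by
  intro x y hxy
  unfold Fa
  split_ifs <;> linarith

lemma Fa_cont {a : ℝ} (ha : 0 ≤ a) (ha' : a ≤ 1/4) : Continuous (Fa a) := by
  unfold Fa
  refine Continuous.if_le (by fun_prop) ?_ continuous_id' continuous_const ?_
  · refine Continuous.if_le (by fun_prop) ?_ continuous_id' continuous_const ?_
    · refine Continuous.if_le (by fun_prop) ?_ continuous_id' continuous_const ?_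
      · refine Continuous.if_le (by fun_prop) ?_ continuous_id' continuous_const ?_
        · refine Continuous.if_le (by fun_prop) ?_ continuous_id' continuous_const ?_
          · refine Continuous.if_le (by fun_prop) (by fun_prop) continuous_id' continuous_const ?_
            intro x hx; subst hx; norm_num
          · intro x hx; subst hx
            rw [if_pos (by norm_num)]; norm_num
        · intro x hx; subst hx
          rw [if_pos (by linarith)]; ring
      · intro x hx; subst hx
        rw [if_pos (by linarith)]; ring
    · intro x hx; subst hx
      rw [if_pos (by linarith)]; norm_num
  · intro x hx; subst hx
    rw [if_pos (by norm_num)]; norm_num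

lemma Fa_image {a : ℝ} (ha : 0 ≤ a) (ha' : a ≤ 1/4) : Fa a '' I16 = I16 := by
  have hm := Fa_strictMono ha ha'
  have hc := Fa_cont ha ha'
  have e1 : Fa a (-(1/4)) = -(1/4) := by
    unfold Fa; rw [if_pos (by norm_num)]; norm_num
  have e2 : Fa a (1/4) = 1/4 := by
    unfold Fa
    rw [if_neg (by norm_num), if_neg (by norm_num), if_neg (by linarith),
      if_neg (by linarith), if_neg (by norm_num), if_neg (by norm_num)]
    norm_num
  apply Set.Subset.antisymm
  · rintro _ ⟨x, hx, rfl⟩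
    simp only [I16, Set.mem_Ioo] at hx ⊢
    constructor
    · rw [← e1]; exact hm hx.1
    · rw [← e2]; exact hm hx.2
  · intro y hy
    have h := intermediate_value_Ioo (by norm_num : (-(1/4) : ℝ) ≤ 1/4) hc.continuousOn
    rw [e1, e2] at h
    exact h hy

set_option maxHeartbeats 1600000 in
lemma Fa_eq_of_abs {a b x : ℝ} (ha : 0 < a) (hb : 0 ≤ b) (hba : b ≤ a)
    (hx : a ≤ |x|) : Fa b x = Fa a x := by
  rcases le_abs.mp hx with h | h <;>
  · unfold Fa; split_ifs <;> linarith

lemma Fa_at_zero {a : ℝ} (ha : 0 < a) : Fa a 0 = a/4 := by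
  unfold Fa
  rw [if_neg (by norm_num), if_neg (by norm_num), if_neg (by simp; linarith),
    if_pos (by linarith)]
  ring

lemma Fa_zero_zero : Fa 0 0 = 0 := by
  unfold Fa
  rw [if_neg (by norm_num), if_neg (by norm_num), if_pos (by norm_num)]
  norm_num

set_option maxHeartbeats 1600000 in
lemma Fa_gt {a x : ℝ} (ha : 0 < a) (hx : x ∈ I16) : x < Fa a x := by
  simp only [I16, Set.mem_Ioo] at hx
  obtain ⟨hl, hr⟩ := hx
  unfold Fa
  split_ifs <;> linarith

lemma Fa_pl {a : ℝ} (ha : 0 < a) (ha' : a ≤ 1/4)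
    (hd2 : IsDyadic (-(a/2))) (hd4 : IsDyadic (a/4)) : IsDyadicPL (Fa a) := by
  refine ⟨(Fa_strictMono ha.le ha').strictMonoOn _, Fa_image ha.le ha',
    {-(3/16), -(1/8), -(a/2), a/4, 1/16, 1/8}, ?_, ?_, ?_⟩
  · exact (Set.finite_singleton _).insert _ |>.insert _ |>.insert _ |>.insert _ |>.insert _
  · intro x hxF
    simp only [Set.mem_insert_iff, Set.mem_singleton_iff] at hxF
    rcases hxF with rfl | rfl | rfl | rfl | rfl | rfl
    · exact ⟨-3, 4, by norm_num⟩
    · exact ⟨-1, 3, by norm_num⟩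
    · exact hd2
    · exact hd4
    · exact ⟨1, 4, by norm_num⟩
    · exact ⟨1, 3, by norm_num⟩
  · intro x hx hxF
    simp only [Set.mem_insert_iff, Set.mem_singleton_iff, not_or] at hxF
    obtain ⟨h1, h2, h3, h4, h5, h6⟩ := hxF
    simp only [I16, Set.mem_Ioo] at hx
    rcases lt_or_gt_of_ne h1 with hx1 | hx1
    · refine ⟨Set.Iio (-(3/16)), isOpen_Iio, hx1, 1, 1/4, ⟨1, 2, by norm_num⟩, ?_⟩
      rintro y ⟨hy, -⟩
      simp only [Set.mem_Iio] at hy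
      unfold Fa; rw [if_pos hy.le]; norm_num
    rcases lt_or_gt_of_ne h2 with hx2 | hx2
    · refine ⟨Set.Ioo (-(3/16)) (-(1/8)), isOpen_Ioo, ⟨hx1, hx2⟩, 0, 1/16,
        ⟨1, 4, by norm_num⟩, ?_⟩
      rintro y ⟨hy, -⟩
      simp only [Set.mem_Ioo] at hy
      unfold Fa; rw [if_neg (by linarith), if_pos (by linarith)]; norm_num
    rcases lt_or_gt_of_ne h3 with hx3 | hx3
    · refine ⟨Set.Ioo (-(1/8)) (-(a/2)), isOpen_Ioo, ⟨hx2, hx3⟩, -1, 0,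
        ⟨0, 0, by norm_num⟩, ?_⟩
      rintro y ⟨hy, -⟩
      simp only [Set.mem_Ioo] at hy
      unfold Fa
      rw [if_neg (by linarith), if_neg (by linarith), if_pos (by linarith)]
      rw [zpow_neg_one]; ring
    rcases lt_or_gt_of_ne h4 with hx4 | hx4
    · refine ⟨Set.Ioo (-(a/2)) (a/4), isOpen_Ioo, ⟨hx3, hx4⟩, 0, a/4, hd4, ?_⟩
      rintro y ⟨hy, -⟩
      simp only [Set.mem_Ioo] at hy
      unfold Fa
      rw [if_neg (by linarith), if_neg (by linarith), if_neg (by linarith),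
        if_pos (by linarith)]
      norm_num
    rcases lt_or_gt_of_ne h5 with hx5 | hx5
    · refine ⟨Set.Ioo (a/4) (1/16), isOpen_Ioo, ⟨hx4, hx5⟩, 1, 0,
        ⟨0, 0, by norm_num⟩, ?_⟩
      rintro y ⟨hy, -⟩
      simp only [Set.mem_Ioo] at hy
      unfold Fa
      rw [if_neg (by linarith), if_neg (by linarith), if_neg (by linarith),
        if_neg (by linarith), if_pos (by linarith)]
      norm_num
    rcases lt_or_gt_of_ne h6 with hx6 | hx6
    · refine ⟨Set.Ioo (1/16) (1/8), isOpen_Ioo, ⟨hx5, hx6⟩, 0, 1/16,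
        ⟨1, 4, by norm_num⟩, ?_⟩
      rintro y ⟨hy, -⟩
      simp only [Set.mem_Ioo] at hy
      unfold Fa
      rw [if_neg (by linarith), if_neg (by linarith), if_neg (by linarith),
        if_neg (by linarith), if_neg (by linarith), if_pos (by linarith)]
      norm_num
    · refine ⟨Set.Ioi (1/8), isOpen_Ioi, hx6, -1, 1/8, ⟨1, 3, by norm_num⟩, ?_⟩
      rintro y ⟨hy, -⟩
      simp only [Set.mem_Ioi] at hy
      unfold Fa
      rw [if_neg (by linarith), if_neg (by linarith), if_neg (by linarith),
        if_neg (by linarith), if_neg (by linarith), if_neg (by linarith)]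
      rw [zpow_neg_one]; ring

lemma four_pow_eq (n : ℕ) : (4:ℝ)^(n+1) = 2^(2*n+2) := by
  rw [show (4:ℝ) = 2^2 by norm_num, ← pow_mul, show 2*(n+1) = 2*n+2 by ring]

lemma an_pos (n : ℕ) : (0:ℝ) < 1/4^(n+1) := by positivity

lemma an_le (n : ℕ) : (1:ℝ)/4^(n+1) ≤ 1/4 := by
  have h : (4:ℝ) ≤ 4^(n+1) := by
    calc (4:ℝ) = 4^1 := (pow_one 4).symm
    _ ≤ 4^(n+1) := by
        gcongr
        · norm_num
        · omega
  exact one_div_le_one_div_of_le (by norm_num) h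

theorem stmt16 :
    ∃ f : ℕ → ℝ → ℝ,
      (∀ n, IsDyadicPL (f n)) ∧
      (∀ n, ∀ x ∈ I16, x < f n x) ∧
      (∀ m n : ℕ, m ≤ n → ∀ x ∈ I16, 1 / 4 ^ (m + 1) ≤ |x| → f n x = f m x) ∧
      Tendsto (fun n => f n 0) atTop (𝓝 0) ∧
      ∃ fi : ℝ → ℝ,
        (∀ x ∈ I16, Tendsto (fun n => f n x) atTop (𝓝 (fi x))) ∧
        StrictMonoOn fi I16 ∧ fi '' I16 = I16 ∧ fi 0 = 0 ∧
        ∀ x ∈ I16, x ≠ 0 → x < fi x := by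
  have h0 : Tendsto (fun k : ℕ => (1:ℝ)/4^(k+1)) atTop (𝓝 0) := by
    have h1 : Tendsto (fun k : ℕ => ((1:ℝ)/4)^k) atTop (𝓝 0) :=
      tendsto_pow_atTop_nhds_zero_of_lt_one (by norm_num) (by norm_num)
    have h2 := h1.comp (tendsto_add_atTop_nat 1)
    refine h2.congr fun k => ?_
    simp [div_pow]
  refine ⟨fun n => Fa (1/4^(n+1)), ?_, ?_, ?_, ?_, Fa 0, ?_, ?_, ?_, ?_, ?_⟩
  · intro n
    refine Fa_pl (an_pos n) (an_le n) ⟨-1, 2*n+3, ?_⟩ ⟨1, 2*n+4, ?_⟩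
    · have h2 : (2:ℝ)^(2*n+2) ≠ 0 := by positivity
      rw [four_pow_eq, show 2*n+3 = 2*n+2+1 by ring, pow_succ]
      push_cast
      field_simp
      ring
    · have h2 : (2:ℝ)^(2*n+2) ≠ 0 := by positivity
      rw [four_pow_eq, show 2*n+4 = 2*n+2+2 by ring, pow_add]
      push_cast
      field_simp
      ring
  · intro n x hx
    exact Fa_gt (an_pos n) hx
  · intro m n hmn x _ hxabs
    have hba : (1:ℝ)/4^(n+1) ≤ 1/4^(m+1) := by
      apply one_div_le_one_div_of_le (by positivity)
      exact pow_le_pow_right₀ (by norm_num) (by omega)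
    exact Fa_eq_of_abs (an_pos m) (an_pos n).le hba hxabs
  · have heq : (fun n : ℕ => Fa (1/4^(n+1)) 0) = fun n : ℕ => (1/4^(n+1))/4 :=
      funext fun n => Fa_at_zero (an_pos n)
    rw [heq]
    simpa using h0.div_const 4
  · intro x hx
    rcases eq_or_ne x 0 with rfl | hx0
    · rw [Fa_zero_zero]
      have heq : (fun n : ℕ => Fa (1/4^(n+1)) 0) = fun n : ℕ => (1/4^(n+1))/4 :=
        funext fun n => Fa_at_zero (an_pos n)
      rw [heq]
      simpa using h0.div_const 4
    · have hax : 0 < |x| := abs_pos.mpr hx0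
      refine Tendsto.congr' ?_ tendsto_const_nhds
      filter_upwards [h0.eventually_lt_const hax] with k hk
      exact Fa_eq_of_abs (an_pos k) le_rfl (an_pos k).le hk.le
  · exact (Fa_strictMono le_rfl (by norm_num)).strictMonoOn _
  · exact Fa_image le_rfl (by norm_num)
  · exact Fa_zero_zero
  · intro x hx hx0
    simp only [I16, Set.mem_Ioo] at hx
    rcases hx0.lt_or_gt with h | h <;>
    · unfold Fa
      split_ifs <;> linarith
end

section
/- Let G = F_∞ be the free group on a countably infinite set, and let Γ = {f ∈ Homeo₀(ℝ) : f(0) = 0}. If U and V are nonempty open subsets of Rep_min(G) (with the topology of pointwise convergence) that are each invariant under conjugation by every element of Γ (that is, f.φ ∈ U whenever φ ∈ U and f ∈ Γ, and similarly for V), then the closures of U and V in Rep_min(G) intersect. -/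
open Topology Filter

/-
Pick `φ ∈ U`. As `U` is open for pointwise convergence, it contains every minimal action that
agrees with `φ` at finitely many pairs `(g, x)`, and these `g` only involve the generators
`0, …, K`. Conjugate the action of those generators into a small interval `s ∋ 0` along a squeeze
`ℝ ≃o s`, extended by the identity off `s`, and let the other generators act by translations
by `√2` and `1`, which keeps the action minimal. A homeomorphism fixing `0` that coincides with
the squeeze near the finitely many relevant points conjugates this action into one agreeing with
`φ` at those pairs, so by invariance it lies in `U`. As `s` shrinks to `0` these actions converge
pointwise to the translation action `θ_K`, which does not depend on `φ`; taking `K` large enough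
for both `U` and `V` puts `θ_K` in both closures.
-/

open Set Real

noncomputable section

lemma Set.OrdConnected.lt_of_mem_of_notMem {α : Type*} [LinearOrder α] {s : Set α}
    [s.OrdConnected] {x y z : α} (hx : x ∈ s) (hz : z ∈ s) (hy : y ∉ s) (hxy : x < y) :
    z < y :=
  lt_of_not_ge fun hyz => hy (Set.OrdConnected.out ‹_› hx hz ⟨hxy.le, hyz⟩)

lemma Set.OrdConnected.lt_of_notMem_of_mem {α : Type*} [LinearOrder α] {s : Set α}
    [s.OrdConnected] {x y z : α} (hx : x ∉ s) (hy : y ∈ s) (hz : z ∈ s) (hxy : x < y) :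
    x < z :=
  lt_of_not_ge fun hzx => hx (Set.OrdConnected.out ‹_› hz hy ⟨hzx, hxy.le⟩)

section Squeeze

variable {α : Type*} [LinearOrder α] {s : Set α} (e : α ≃o s)

open scoped Classical in
def squeezeFun (ρ : α → α) (x : α) : α :=
  if h : x ∈ s then e (ρ (e.symm ⟨x, h⟩)) else x

lemma squeezeFun_apply_coe (ρ : α → α) (y : α) : squeezeFun e ρ (e y) = e (ρ y) := by
  simp [squeezeFun]

lemma squeezeFun_of_notMem (ρ : α → α) {x : α} (hx : x ∉ s) : squeezeFun e ρ x = x := by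
  simp [squeezeFun, hx]

lemma exists_coe_eq_or_notMem (x : α) : (∃ y, (e y : α) = x) ∨ x ∉ s := by
  by_cases hx : x ∈ s
  · exact .inl ⟨e.symm ⟨x, hx⟩, by simp⟩
  · exact .inr hx

lemma squeezeFun_squeezeFun (ρ σ : α → α) (x : α) :
    squeezeFun e ρ (squeezeFun e σ x) = squeezeFun e (ρ ∘ σ) x := by
  obtain ⟨y, rfl⟩ | hx := exists_coe_eq_or_notMem e x
  · simp [squeezeFun_apply_coe]
  · simp [squeezeFun_of_notMem e _ hx]

lemma squeezeFun_id : squeezeFun e id = id := by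
  funext x
  obtain ⟨y, rfl⟩ | hx := exists_coe_eq_or_notMem e x
  · simp [squeezeFun_apply_coe]
  · simp [squeezeFun_of_notMem e _ hx]

lemma strictMono_squeezeFun [s.OrdConnected] {ρ : α → α} (hρ : StrictMono ρ) :
    StrictMono (squeezeFun e ρ) := by
  intro x y hxy
  obtain ⟨x, rfl⟩ | hx := exists_coe_eq_or_notMem e x <;>
    obtain ⟨y, rfl⟩ | hy := exists_coe_eq_or_notMem e y
  · simpa [squeezeFun_apply_coe] using hρ (by simpa using hxy)
  · rw [squeezeFun_apply_coe, squeezeFun_of_notMem e _ hy]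
    exact Set.OrdConnected.lt_of_mem_of_notMem (e x).2 (e _).2 hy hxy
  · rw [squeezeFun_apply_coe, squeezeFun_of_notMem e _ hx]
    exact Set.OrdConnected.lt_of_notMem_of_mem hx (e y).2 (e _).2 hxy
  · rwa [squeezeFun_of_notMem e _ hx, squeezeFun_of_notMem e _ hy]

def squeezeHom [s.OrdConnected] : (α ≃o α) →* (α ≃o α) where
  toFun ρ :=
    { toFun := squeezeFun e ρ
      invFun := squeezeFun e ρ.symm
      left_inv x := by
        rw [squeezeFun_squeezeFun, show ⇑ρ.symm ∘ ⇑ρ = id from funext ρ.symm_apply_apply,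
          squeezeFun_id, id]
      right_inv x := by
        rw [squeezeFun_squeezeFun, show ⇑ρ ∘ ⇑ρ.symm = id from funext ρ.apply_symm_apply,
          squeezeFun_id, id]
      map_rel_iff' := (strictMono_squeezeFun e ρ.strictMono).le_iff_le }
  map_one' := OrderIso.ext (squeezeFun_id e)
  map_mul' ρ σ := OrderIso.ext (funext fun x => (squeezeFun_squeezeFun e ρ σ x).symm)

lemma squeezeHom_apply_coe [s.OrdConnected] (ρ : α ≃o α) (y : α) :
    squeezeHom e ρ (e y) = e (ρ y) :=
  squeezeFun_apply_coe e ρ y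

end Squeeze

lemma dist_squeezeHom_apply_le {s : Set ℝ} [s.OrdConnected] (e : ℝ ≃o s) {a b : ℝ}
    (hs : s ⊆ Icc a b) (ρ : ℝ ≃o ℝ) (x : ℝ) : dist (squeezeHom e ρ x) x ≤ b - a := by
  obtain ⟨y, rfl⟩ | hx := exists_coe_eq_or_notMem e x
  · rw [squeezeHom_apply_coe]
    exact Real.dist_le_of_mem_Icc (hs (e _).2) (hs (e y).2)
  · have hab : a ≤ b := (hs (e 0).2).1.trans (hs (e 0).2).2
    rw [show squeezeHom e ρ x = x from squeezeFun_of_notMem e ρ hx, dist_self]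
    linarith

lemma exists_orderIso_eqOn_Icc {j : ℝ → ℝ} (hj : StrictMono j) (hjc : Continuous j) {a b : ℝ}
    (hab : ∀ x, j x ∈ Icc a b) {M : ℝ} (hM : 0 ≤ M) :
    ∃ f : ℝ ≃o ℝ, f 0 = j 0 ∧ EqOn f j (Icc (-M) M) := by
  set F : ℝ → ℝ := fun x => j x + (max (x - M) 0 + min (x + M) 0)
  have hFj : EqOn F j (Icc (-M) M) := fun x hx => by
    simp [F, max_eq_right (sub_nonpos.2 hx.2), min_eq_right (neg_le_iff_add_nonneg.1 hx.1)]
  have hmono : StrictMono F := hj.add_monotone fun x y hxy => by gcongr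
  have htop : Tendsto F atTop atTop := by
    refine tendsto_atTop_mono (fun x => ?_) (tendsto_atTop_add_const_right _ (a - M) tendsto_id)
    have := (hab x).1
    rcases min_cases (x + M) 0 with ⟨h, -⟩ | ⟨h, -⟩ <;>
      simp only [F, id, h] <;> linarith [le_max_left (x - M) 0, le_max_right (x - M) 0]
  have hbot : Tendsto F atBot atBot := by
    refine tendsto_atBot_mono (fun x => ?_) (tendsto_atBot_add_const_right _ (b + M) tendsto_id)
    have := (hab x).2
    rcases max_cases (x - M) 0 with ⟨h, -⟩ | ⟨h, -⟩ <;>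
      simp only [F, id, h] <;> linarith [min_le_left (x + M) 0, min_le_right (x + M) 0]
  let f := hmono.orderIsoOfSurjective F ((by fun_prop : Continuous F).surjective htop hbot)
  exact ⟨f, hFj ⟨neg_nonpos.2 hM, hM⟩, hFj⟩

def arctanScaled (n : ℕ) (x : ℝ) : ℝ := arctan x / (n + 1)

lemma arctanScaled_zero (n : ℕ) : arctanScaled n 0 = 0 := by simp [arctanScaled]

lemma strictMono_arctanScaled (n : ℕ) : StrictMono (arctanScaled n) :=
  fun _ _ h => div_lt_div_of_pos_right (arctan_strictMono h) (by positivity)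

lemma continuous_arctanScaled (n : ℕ) : Continuous (arctanScaled n) := by
  unfold arctanScaled; fun_prop

lemma arctanScaled_mem_Icc (n : ℕ) (x : ℝ) :
    arctanScaled n x ∈ Icc (-(π / (n + 1))) (π / (n + 1)) := by
  have h₁ := neg_pi_div_two_lt_arctan x
  have h₂ := arctan_lt_pi_div_two x
  rw [arctanScaled, ← neg_div]
  constructor <;> gcongr <;> linarith [pi_pos]

instance (n : ℕ) : (range (arctanScaled n)).OrdConnected :=
  isPreconnected_iff_ordConnected.1 (isPreconnected_range (continuous_arctanScaled n))

def arctanSqueeze (n : ℕ) : ℝ ≃o range (arctanScaled n) :=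
  (strictMono_arctanScaled n).orderIso _

@[simp] lemma coe_arctanSqueeze (n : ℕ) (x : ℝ) :
    (arctanSqueeze n x : ℝ) = arctanScaled n x :=
  rfl

def translationHom : Multiplicative ℝ →* (ℝ ≃o ℝ) where
  toFun t := OrderIso.addRight t.toAdd
  map_one' := by ext; simp
  map_mul' s t := by ext x; simp [RelIso.mul_apply, add_comm, add_left_comm]

@[simp] lemma translationHom_apply (t : Multiplicative ℝ) (x : ℝ) :
    translationHom t x = x + t.toAdd := rfl

lemma isometry_translationHom (t : Multiplicative ℝ) : Isometry (translationHom t) :=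
  Isometry.of_dist_eq fun x y => by simp

section Actions

variable {G : Type*} [Group G]

def translationSubgroup (φ : G →* (ℝ ≃o ℝ)) : AddSubgroup ℝ where
  carrier := {t | translationHom (.ofAdd t) ∈ φ.range}
  zero_mem' := by
    change translationHom 1 ∈ φ.range
    rw [map_one]
    exact one_mem _
  add_mem' {a b} ha hb := by
    change translationHom (.ofAdd a * .ofAdd b) ∈ φ.range
    rw [map_mul]
    exact mul_mem ha hb
  neg_mem' {a} ha := by
    change translationHom (.ofAdd a)⁻¹ ∈ φ.range
    rw [map_inv]
    exact inv_mem ha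

lemma isMinimalAction_of_dense_translationSubgroup (φ : G →* (ℝ ≃o ℝ))
    (h : Dense (translationSubgroup φ : Set ℝ)) : IsMinimalAction φ := by
  intro x
  refine ((Homeomorph.addLeft x).surjective.denseRange.dense_image
    (Homeomorph.addLeft x).continuous h).mono ?_
  rintro _ ⟨t, ⟨g, hg⟩, rfl⟩
  exact ⟨g, by simp [hg]⟩

lemma isMinimalAction_of_translations (φ : G →* (ℝ ≃o ℝ))
    (h₁ : translationHom (.ofAdd √2) ∈ φ.range) (h₂ : translationHom (.ofAdd 1) ∈ φ.range) :
    IsMinimalAction φ := by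
  refine isMinimalAction_of_dense_translationSubgroup φ (Dense.mono ?_
    (dense_addSubgroupClosure_pair_iff (a := √2) (b := 1) |>.2
      (by simpa using irrational_sqrt_two)))
  exact (AddSubgroup.closure_le _).2 (pair_subset h₁ h₂)

lemma IsMinimalAction.conj {φ : G →* (ℝ ≃o ℝ)} (hφ : IsMinimalAction φ) (f : ℝ ≃o ℝ) :
    IsMinimalAction ((MulAut.conj f).toMonoidHom.comp φ) := by
  intro x
  refine (f.surjective.denseRange.dense_image f.continuous (hφ (f⁻¹ x))).mono ?_
  rintro _ ⟨_, ⟨g, rfl⟩, rfl⟩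
  exact ⟨g, rfl⟩

lemma conjFun_actMap (f : ℝ ≃o ℝ) (φ : G →* (ℝ ≃o ℝ)) :
    conjFun f (actMap φ) = actMap ((MulAut.conj f).toMonoidHom.comp φ) := rfl

def IsMinimalAction.toRepMin {φ : G →* (ℝ ≃o ℝ)} (hφ : IsMinimalAction φ) : RepMin G :=
  ⟨actMap φ, φ, hφ, rfl⟩

def IsConjInvariant (U : Set (RepMin G)) : Prop :=
  ∀ φ ∈ U, ∀ f : ℝ ≃o ℝ, f 0 = 0 → ∀ ψ : RepMin G, (ψ : G → ℝ → ℝ) = conjFun f φ → ψ ∈ U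

end Actions

open FreeGroup

lemma FreeGroup.exists_forall_dist_le {ι X : Type*} [LE X] [PseudoMetricSpace X]
    (g : FreeGroup ι) :
    ∃ N : ℕ, ∀ (Φ Θ : FreeGroup ι →* (X ≃o X)) (ε : ℝ), (∀ h, Isometry (Θ h)) →
      (∀ i x, dist (Φ (of i) x) (Θ (of i) x) ≤ ε) → ∀ x, dist (Φ g x) (Θ g x) ≤ N * ε := by
  induction g using FreeGroup.induction_on with
  | C1 => exact ⟨0, fun Φ Θ ε _ _ x => by simp⟩
  | of i => exact ⟨1, fun Φ Θ ε _ hε x => by simpa using hε i x⟩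
  | inv_of i _ =>
    refine ⟨1, fun Φ Θ ε hΘ hε x => ?_⟩
    set y := Φ (of i)⁻¹ x
    calc dist y (Θ (of i)⁻¹ x)
        = dist (Θ (of i) y) (Θ (of i) (Θ (of i)⁻¹ x)) := ((hΘ _).dist_eq _ _).symm
      _ = dist (Φ (of i) y) (Θ (of i) y) := by rw [dist_comm]; simp [y]
      _ ≤ (1 : ℕ) * ε := by rw [Nat.cast_one, one_mul]; exact hε i y
  | mul a b ha hb =>
    obtain ⟨Na, ha⟩ := ha
    obtain ⟨Nb, hb⟩ := hb
    refine ⟨Na + Nb, fun Φ Θ ε hΘ hε x => ?_⟩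
    rw [_root_.map_mul, _root_.map_mul, RelIso.mul_apply, RelIso.mul_apply]
    calc dist (Φ a (Φ b x)) (Θ a (Θ b x))
        ≤ dist (Φ a (Φ b x)) (Θ a (Φ b x)) + dist (Θ a (Φ b x)) (Θ a (Θ b x)) :=
          dist_triangle _ _ _
      _ ≤ Na * ε + Nb * ε := by
        rw [(hΘ a).dist_eq]
        exact add_le_add (ha Φ Θ ε hΘ hε _) (hb Φ Θ ε hΘ hε x)
      _ = (Na + Nb : ℕ) * ε := by push_cast; ring

lemma FreeGroup.exists_mem_closure_of_Iic (g : FreeGroup ℕ) :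
    ∃ K, g ∈ Subgroup.closure (of '' Iic K) := by
  have hmono : Monotone fun K : ℕ => Subgroup.closure (of '' Iic K) :=
    fun K L h => Subgroup.closure_mono (image_mono (Iic_subset_Iic.2 h))
  induction g using FreeGroup.induction_on with
  | C1 => exact ⟨0, one_mem _⟩
  | of i => exact ⟨i, Subgroup.subset_closure (mem_image_of_mem _ self_mem_Iic)⟩
  | inv_of i h => exact h.imp fun _ => inv_mem
  | mul a b ha hb =>
    obtain ⟨Ka, ha⟩ := ha
    obtain ⟨Kb, hb⟩ := hb
    exact ⟨max Ka Kb, mul_mem (hmono (le_max_left _ _) ha) (hmono (le_max_right _ _) hb)⟩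

def shiftAmount (K i : ℕ) : ℝ := if i ≤ K then 0 else if i = K + 1 then 1 else √2

def shiftAction (K : ℕ) : FreeGroup ℕ →* (ℝ ≃o ℝ) :=
  translationHom.comp (FreeGroup.lift fun i => .ofAdd (shiftAmount K i))

lemma shiftAction_of (K i : ℕ) :
    shiftAction K (of i) = translationHom (.ofAdd (shiftAmount K i)) := by
  simp [shiftAction]

lemma shiftAction_of_of_le {K i : ℕ} (hi : i ≤ K) : shiftAction K (of i) = 1 := by
  simp [shiftAction_of, shiftAmount, hi]

lemma isometry_shiftAction (K : ℕ) (g : FreeGroup ℕ) : Isometry (shiftAction K g) :=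
  isometry_translationHom _

lemma isMinimalAction_of_eq_shiftAction_of_lt (K : ℕ) {φ : FreeGroup ℕ →* (ℝ ≃o ℝ)}
    (h : ∀ i, K < i → φ (of i) = shiftAction K (of i)) : IsMinimalAction φ := by
  refine isMinimalAction_of_translations φ ⟨of (K + 2), ?_⟩ ⟨of (K + 1), ?_⟩
  · simp [h (K + 2) (by omega), shiftAction_of, shiftAmount]
  · simp [h (K + 1) (by omega), shiftAction_of, shiftAmount]

lemma isMinimalAction_shiftAction (K : ℕ) : IsMinimalAction (shiftAction K) :=
  isMinimalAction_of_eq_shiftAction_of_lt K fun _ _ => rfl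

section SqueezedAction

variable {s : Set ℝ} [s.OrdConnected] (K : ℕ) (e : ℝ ≃o s) (φ : FreeGroup ℕ →* (ℝ ≃o ℝ))

def squeezedAction : FreeGroup ℕ →* (ℝ ≃o ℝ) :=
  FreeGroup.lift fun i => if i ≤ K then squeezeHom e (φ (of i)) else shiftAction K (of i)

lemma squeezedAction_eqOn_closure :
    EqOn (squeezedAction K e φ) ((squeezeHom e).comp φ) (Subgroup.closure (of '' Iic K)) := by
  refine MonoidHom.eqOn_closure ?_
  rintro _ ⟨i, hi, rfl⟩
  simp [squeezedAction, show i ≤ K from hi]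

lemma isMinimalAction_squeezedAction : IsMinimalAction (squeezedAction K e φ) :=
  isMinimalAction_of_eq_shiftAction_of_lt K fun i hi => by simp [squeezedAction, not_le.2 hi]

lemma dist_squeezedAction_of_le {a b : ℝ} (hs : s ⊆ Icc a b) (i : ℕ) (x : ℝ) :
    dist (squeezedAction K e φ (of i) x) (shiftAction K (of i) x) ≤ b - a := by
  by_cases hi : i ≤ K
  · simpa [squeezedAction, hi, shiftAction_of_of_le hi] using dist_squeezeHom_apply_le e hs _ x
  · simpa [squeezedAction, hi] using (hs (e 0).2).1.trans (hs (e 0).2).2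

end SqueezedAction

lemma tendsto_squeezedAction (K : ℕ) (φ : FreeGroup ℕ →* (ℝ ≃o ℝ)) :
    Tendsto (fun n => (isMinimalAction_squeezedAction K (arctanSqueeze n) φ).toRepMin) atTop
      (𝓝 (isMinimalAction_shiftAction K).toRepMin) := by
  refine tendsto_subtype_rng.2 (tendsto_pi_nhds.2 fun g => tendsto_pi_nhds.2 fun x => ?_)
  obtain ⟨N, hN⟩ := FreeGroup.exists_forall_dist_le (X := ℝ) g
  have hbound : Tendsto (fun n : ℕ => N * (π / (n + 1) - -(π / (n + 1)))) atTop (𝓝 0) := by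
    convert (tendsto_one_div_add_atTop_nhds_zero_nat (𝕜 := ℝ)).const_mul (N * (2 * π)) using 2
    · ring
    · simp
  refine tendsto_iff_dist_tendsto_zero.2
    (squeeze_zero (fun _ => dist_nonneg) (fun n => ?_) hbound)
  exact hN _ _ _ (isometry_shiftAction K)
    (dist_squeezedAction_of_le K _ φ (range_subset_iff.2 (arctanScaled_mem_Icc n))) x

lemma exists_finset_forall_eq_imp_mem {ι κ Y : Type*} [TopologicalSpace Y]
    {R : Set (ι → κ → Y)} {U : Set R} (hU : IsOpen U) {p : R} (hp : p ∈ U) :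
    ∃ P : Finset (ι × κ), ∀ q : R,
      (∀ y ∈ P, (q : ι → κ → Y) y.1 y.2 = (p : ι → κ → Y) y.1 y.2) → q ∈ U := by
  obtain ⟨O, hO, rfl⟩ := isOpen_induced_iff.1 hU
  obtain ⟨P, u, hu, hPu⟩ :=
    isOpen_pi_iff.1 (hO.preimage Homeomorph.piCurry.continuous) (Function.uncurry p.1) hp
  refine ⟨P, fun q hq => @hPu (Function.uncurry q.1) fun y hy => ?_⟩
  change (q : ι → κ → Y) y.1 y.2 ∈ u y
  exact hq y hy ▸ (hu y hy).2

lemma exists_forall_squeezedAction_mem {U : Set (RepMin (FreeGroup ℕ))} (hUo : IsOpen U)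
    (hU : IsConjInvariant U) {p : RepMin (FreeGroup ℕ)} (hpU : p ∈ U)
    {φ : FreeGroup ℕ →* (ℝ ≃o ℝ)} (hφ : (p : FreeGroup ℕ → ℝ → ℝ) = actMap φ) :
    ∃ K₀, ∀ K ≥ K₀, ∀ n,
      (isMinimalAction_squeezedAction K (arctanSqueeze n) φ).toRepMin ∈ U := by
  obtain ⟨P, hP⟩ := exists_finset_forall_eq_imp_mem hUo hpU
  choose Kg hKg using FreeGroup.exists_mem_closure_of_Iic
  obtain ⟨K₀, hK₀⟩ := (P.image fun y => Kg y.1).exists_le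
  set M := ∑ y ∈ P, (|y.2| + |φ y.1 y.2|)
  have hM : ∀ y ∈ P, y.2 ∈ Icc (-M) M ∧ φ y.1 y.2 ∈ Icc (-M) M := fun y hy => by
    have := Finset.single_le_sum (f := fun y : FreeGroup ℕ × ℝ => |y.2| + |φ y.1 y.2|)
      (fun _ _ => by positivity) hy
    simp only [mem_Icc, ← abs_le]
    constructor <;> linarith [abs_nonneg y.2, abs_nonneg (φ y.1 y.2)]
  have hM0 : 0 ≤ M := Finset.sum_nonneg fun _ _ => by positivity
  refine ⟨K₀, fun K hK n => ?_⟩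
  obtain ⟨f, hf0, hf⟩ := exists_orderIso_eqOn_Icc (strictMono_arctanScaled n)
    (continuous_arctanScaled n) (arctanScaled_mem_Icc n) hM0
  set Φ := squeezedAction K (arctanSqueeze n) φ
  have hΦ := isMinimalAction_squeezedAction K (arctanSqueeze n) φ
  have hw : (hΦ.conj f⁻¹).toRepMin ∈ U := hP _ fun ⟨g, x⟩ hy => by
    have hg : g ∈ Subgroup.closure (of '' Iic K) :=
      Subgroup.closure_mono (image_mono (Iic_subset_Iic.2
        ((hK₀ _ (Finset.mem_image_of_mem _ hy)).trans hK))) (hKg g)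
    have hΦg : Φ g = squeezeHom (arctanSqueeze n) (φ g) :=
      squeezedAction_eqOn_closure K (arctanSqueeze n) φ hg
    calc f⁻¹ (Φ g (f x))
        = f⁻¹ (squeezeHom (arctanSqueeze n) (φ g) (arctanSqueeze n x)) := by
          rw [hΦg, hf (hM _ hy).1, coe_arctanSqueeze]
      _ = f⁻¹ (f (φ g x)) := by
          rw [squeezeHom_apply_coe, coe_arctanSqueeze, hf (hM _ hy).2]
      _ = (p : FreeGroup ℕ → ℝ → ℝ) g x := by rw [RelIso.inv_apply_self, hφ, actMap]
  refine hU _ hw f (hf0.trans (arctanScaled_zero n)) _ ?_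
  ext g x
  simp [IsMinimalAction.toRepMin, conjFun_actMap, actMap, RelIso.mul_apply]

end

theorem stmt18 (U V : Set ↥(RepMin (FreeGroup ℕ)))
    (hUo : IsOpen U) (hVo : IsOpen V)
    (hUne : U.Nonempty) (hVne : V.Nonempty)
    (hUinv : ∀ φ : ↥(RepMin (FreeGroup ℕ)), φ ∈ U →
      ∀ f : ℝ ≃o ℝ, f 0 = 0 →
        ∀ ψ : ↥(RepMin (FreeGroup ℕ)),
          (ψ : FreeGroup ℕ → ℝ → ℝ) = conjFun f (φ : FreeGroup ℕ → ℝ → ℝ) → ψ ∈ U)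
    (hVinv : ∀ φ : ↥(RepMin (FreeGroup ℕ)), φ ∈ V →
      ∀ f : ℝ ≃o ℝ, f 0 = 0 →
        ∀ ψ : ↥(RepMin (FreeGroup ℕ)),
          (ψ : FreeGroup ℕ → ℝ → ℝ) = conjFun f (φ : FreeGroup ℕ → ℝ → ℝ) → ψ ∈ V) :
    (closure U ∩ closure V).Nonempty := by
  obtain ⟨p, hpU⟩ := hUne
  obtain ⟨q, hqV⟩ := hVne
  obtain ⟨φ, -, hφ⟩ := p.2
  obtain ⟨ψ, -, hψ⟩ := q.2
  obtain ⟨KU, hKU⟩ := exists_forall_squeezedAction_mem hUo hUinv hpU hφ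
  obtain ⟨KV, hKV⟩ := exists_forall_squeezedAction_mem hVo hVinv hqV hψ
  set K := max KU KV
  exact ⟨(isMinimalAction_shiftAction K).toRepMin,
    mem_closure_of_tendsto (tendsto_squeezedAction K φ) (.of_forall (hKU K (le_max_left _ _))),
    mem_closure_of_tendsto (tendsto_squeezedAction K ψ) (.of_forall (hKV K (le_max_right _ _)))⟩
end
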